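/- arXiv:math/9901134 — 12 statements merged into one kernel-verified Lean document; each statement's English description precedes it below -/
import Mathlib

section
/- Let K be a Polish space and F : K → ℝ a function. Suppose K = ⋃_{i=1}^∞ W^i where each W^i is an ambiguous set (both Fσ and Gδ), and F restricted to each W^i is continuous. Then F is pointwise stabilizing: there exists a sequence (f_n) of continuous functions on K such that for each k ∈ K there is m with f_n(k) = F(k) for all n ≥ m. -/
open Filter Topology Set

def IsFsigma {X : Type*} [TopologicalSpace X] (s : Set X) : Prop :=
  ∃ F : ℕ → Set X, (∀ n, IsClosed (F n)) ∧ s = ⋃ n, F n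

def IsAmbiguous {X : Type*} [TopologicalSpace X] (s : Set X) : Prop :=
  IsFsigma s ∧ IsGδ s

def PointwiseStabilizing {X : Type*} [TopologicalSpace X] (F : X → ℝ) : Prop :=
  ∃ f : ℕ → X → ℝ, (∀ n, Continuous (f n)) ∧ ∀ k, ∃ m, ∀ n ≥ m, f n k = F k

def BaireOne {X : Type*} [TopologicalSpace X] (F : X → ℝ) : Prop :=
  ∃ f : ℕ → X → ℝ, (∀ n, Continuous (f n)) ∧ ∀ x, Tendsto (fun n => f n x) atTop (𝓝 (F x))

def DSC {X : Type*} [TopologicalSpace X] (f : X → ℝ) : Prop :=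
  ∃ g : ℕ → X → ℝ, (∀ n, Continuous (g n)) ∧ (∀ x, Tendsto (fun n => g n x) atTop (𝓝 (f x)))
    ∧ ∀ x, Summable fun n => |g (n + 1) x - g n x|

def DBSC {X : Type*} [TopologicalSpace X] (f : X → ℝ) : Prop :=
  ∃ (φ : ℕ → X → ℝ) (C : ℝ), (∀ n, Continuous (φ n)) ∧ (∀ x, HasSum (fun n => φ n x) (f x))
    ∧ ∀ x, ∑' n, |φ n x| ≤ C

theorem test
    {K : Type*} [TopologicalSpace K] [PolishSpace K] (F : K → ℝ) (W : ℕ → Set K)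
    (hWF : ∀ i, IsFsigma (W i)) (hcov : (⋃ i, W i) = Set.univ)
    (hcont : ∀ i, Continuous ((W i).restrict F)) :
    ∃ f : ℕ → K → ℝ, (∀ n, Continuous (f n)) ∧ ∀ k, ∃ m, ∀ n ≥ m, f n k = F k := by
  letI := TopologicalSpace.upgradeIsCompletelyMetrizable K
  have hW' : ∀ i, ContinuousOn F (W i) := fun i =>
    continuousOn_iff_continuous_restrict.2 (hcont i)
  choose C hCcl hCeq using hWF
  set D : ℕ → Set K := fun n => ⋃ p : Fin (n+1) × Fin (n+1), C p.1 p.2 with hD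
  have hDcl : ∀ n, IsClosed (D n) := fun n =>
    isClosed_iUnion_of_finite fun p => hCcl p.1 p.2
  have hsub : ∀ (i m : ℕ), C i m ⊆ W i := fun i m => (hCeq i) ▸ subset_iUnion (C i) m
  have hDcont : ∀ n, ContinuousOn F (D n) := by
    intro n
    exact (locallyFinite_of_finite _).continuousOn_iUnion
      (fun p => hCcl p.1 p.2) (fun p => (hW' p.1).mono (hsub p.1 p.2))
  have hext : ∀ n, ∃ g : C(K, ℝ), ∀ x ∈ D n, g x = F x := by
    intro n
    obtain ⟨g, hg⟩ := ContinuousMap.exists_restrict_eq (Y := ℝ) (hDcl n)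
      ⟨(D n).restrict F, ((hDcont n).restrict)⟩
    exact ⟨g, fun x hx => by
      have := congrFun (congrArg ContinuousMap.toFun hg) ⟨x, hx⟩
      simp at this; exact this⟩
  choose g hg using hext
  refine ⟨fun n => g n, fun n => (g n).continuous, fun k => ?_⟩
  have hk : k ∈ ⋃ i, W i := hcov ▸ mem_univ k
  obtain ⟨i, hi⟩ := mem_iUnion.1 hk
  rw [hCeq i] at hi
  obtain ⟨m, hm⟩ := mem_iUnion.1 hi
  refine ⟨max i m, fun n hn => ?_⟩
  have hk' : k ∈ D n := mem_iUnion.2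
    ⟨(⟨i, Nat.lt_succ_of_le (le_trans (le_max_left i m) hn)⟩,
      ⟨m, Nat.lt_succ_of_le (le_trans (le_max_right i m) hn)⟩), hm⟩
  exact hg n k hk'

theorem differences_semicontinuous_stmt_0
    {K : Type*} [TopologicalSpace K] [PolishSpace K] (F : K → ℝ) (W : ℕ → Set K)
    (hW : ∀ i, IsAmbiguous (W i)) (hcov : (⋃ i, W i) = Set.univ)
    (hcont : ∀ i, Continuous ((W i).restrict F)) :
    PointwiseStabilizing F :=
  test F W (fun i => (hW i).1) hcov hcont
end

section
/- Let K be a Polish space and F : K → ℝ a function. Suppose K = ⋃_{i=1}^∞ W^i where each W^i is an Fσ set and F restricted to each W^i is continuous. Then F is pointwise stabilizing. -/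
open Filter Topology Set

theorem differences_semicontinuous_stmt_1
    {K : Type*} [TopologicalSpace K] [PolishSpace K] (F : K → ℝ) (W : ℕ → Set K)
    (hW : ∀ i, IsFsigma (W i)) (hcov : (⋃ i, W i) = Set.univ)
    (hcont : ∀ i, Continuous ((W i).restrict F)) :
    PointwiseStabilizing F := by
  choose C hCclosed hCeq using hW
  -- F is continuous on each W i, hence on each C i n
  have hFW : ∀ i, ContinuousOn F (W i) := fun i =>
    continuousOn_iff_continuous_restrict.2 (hcont i)
  have hFC : ∀ i n, ContinuousOn F (C i n) := fun i n =>
    (hFW i).mono (by rw [hCeq i]; exact subset_iUnion _ n)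
  set D : ℕ → Set K := fun m => C m.unpair.1 m.unpair.2 with hD
  have hDclosed : ∀ m, IsClosed (D m) := fun m => hCclosed _ _
  have hFD : ∀ m, ContinuousOn F (D m) := fun m => hFC _ _
  set E : ℕ → Set K := fun m => ⋃ j : Fin (m + 1), D j with hE
  have hEclosed : ∀ m, IsClosed (E m) := fun m =>
    isClosed_iUnion_of_finite fun j => hDclosed j
  have hFE : ∀ m, ContinuousOn F (E m) := fun m => by
    refine LocallyFinite.continuousOn_iUnion ?_ (fun j => hDclosed j) (fun j => hFD j)
    exact locallyFinite_of_finite _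
  have hmono : ∀ {m n : ℕ}, m ≤ n → E m ⊆ E n := by
    intro m n hmn
    refine iUnion_subset fun j => ?_
    exact subset_iUnion (fun j : Fin (n+1) => D j) ⟨j, lt_of_lt_of_le j.2 (by omega)⟩
  -- Tietze extension
  haveI : NormalSpace K := by
    letI := TopologicalSpace.upgradeIsCompletelyMetrizable K
    infer_instance
  have : ∀ m, ∃ g : K → ℝ, Continuous g ∧ ∀ x ∈ E m, g x = F x := by
    intro m
    obtain ⟨g, hg⟩ := ContinuousMap.exists_restrict_eq (hEclosed m)
      ⟨(E m).restrict F, continuousOn_iff_continuous_restrict.1 (hFE m)⟩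
    refine ⟨g, g.continuous, fun x hx => ?_⟩
    have := congrFun (congrArg DFunLike.coe hg) ⟨x, hx⟩
    exact this
  choose g hgc hge using this
  refine ⟨g, hgc, fun k => ?_⟩
  have hk : k ∈ ⋃ i, W i := by rw [hcov]; trivial
  obtain ⟨i, hi⟩ := mem_iUnion.1 hk
  rw [hCeq i] at hi
  obtain ⟨n, hn⟩ := mem_iUnion.1 hi
  refine ⟨Nat.pair i n, fun m hm => ?_⟩
  refine hge m k (hmono hm ?_)
  exact mem_iUnion.2 ⟨⟨Nat.pair i n, Nat.lt_succ_self _⟩, by simp [hD, Nat.unpair_pair, hn]⟩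
end

section
/- Let K be a Polish space and F : K → ℝ of the first Baire class. Then the following are equivalent: (1) F is pointwise stabilizing; (2) there exists a sequence (V^i) of sets, each a difference of two closed subsets of K, with ⋃ V^i = K and F restricted to each V^i continuous; (3) there exists a sequence (V^i) of ambiguous subsets of K with ⋃ V^i = K and F restricted to each V^i continuous. -/
open Filter Topology Set

/-- In a metric space, every open set is a countable union of closed sets. -/
lemma isFsigma_of_isOpen_aux {X : Type*} [MetricSpace X] {U : Set X} (hU : IsOpen U) :
    IsFsigma U := by
  refine ⟨fun n => {x | (n : ENNReal)⁻¹ ≤ EMetric.infEdist x Uᶜ}, fun n =>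
    isClosed_le continuous_const EMetric.continuous_infEdist, ?_⟩
  ext x
  simp only [mem_iUnion, mem_setOf_eq]
  constructor
  · intro hx
    have h1 : x ∉ closure Uᶜ := by
      rw [hU.isClosed_compl.closure_eq]; simpa using hx
    have h2 : 0 < EMetric.infEdist x Uᶜ := Metric.infEDist_pos_iff_notMem_closure.2 h1
    obtain ⟨n, hn⟩ := ENNReal.exists_inv_nat_lt h2.ne'
    exact ⟨n, hn.le⟩
  · rintro ⟨n, hn⟩
    have h2 : 0 < EMetric.infEdist x Uᶜ :=
      lt_of_lt_of_le (ENNReal.inv_pos.2 (ENNReal.natCast_ne_top n)) hn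
    have h1 : x ∉ closure Uᶜ := Metric.infEDist_pos_iff_notMem_closure.1 h2
    by_contra h
    exact h1 (subset_closure (by simpa using h))

/-- Pasting lemma: continuity on a union of two closed sets. -/
lemma continuousOn_union_closed_aux {X Y : Type*} [TopologicalSpace X] [TopologicalSpace Y]
    {f : X → Y} {s t : Set X} (hs : IsClosed s) (ht : IsClosed t)
    (hfs : ContinuousOn f s) (hft : ContinuousOn f t) : ContinuousOn f (s ∪ t) := by
  intro x hx
  have hhs : ContinuousWithinAt f s x := by
    by_cases h : x ∈ s
    · exact hfs x h
    · exact continuousWithinAt_of_notMem_closure (by rwa [hs.closure_eq])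
  have hht : ContinuousWithinAt f t x := by
    by_cases h : x ∈ t
    · exact hft x h
    · exact continuousWithinAt_of_notMem_closure (by rwa [ht.closure_eq])
  exact hhs.union hht

/-- A countable closed cover with continuous restrictions gives pointwise stabilization. -/
lemma stab_of_closed_cover_aux {K : Type*} [TopologicalSpace K] [PolishSpace K] (F : K → ℝ)
    (C : ℕ → Set K) (hC : ∀ n, IsClosed (C n)) (hcov : (⋃ n, C n) = univ)
    (hcont : ∀ n, ContinuousOn F (C n)) : PointwiseStabilizing F := by
  letI := TopologicalSpace.upgradeIsCompletelyMetrizable K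
  set D : ℕ → Set K := fun n => ⋃ i ∈ Finset.range (n + 1), C i with hD
  have hDclosed : ∀ n, IsClosed (D n) := fun n => isClosed_biUnion_finset (fun i _ => hC i)
  have hDcont : ∀ n, ContinuousOn F (D n) := by
    intro n
    induction n with
    | zero => simpa [hD] using hcont 0
    | succ n ih =>
      have heq : D (n + 1) = C (n + 1) ∪ D n := by
        simp only [hD, Finset.range_add_one, Finset.set_biUnion_insert]
      rw [heq]
      exact continuousOn_union_closed_aux (hC _) (hDclosed n) (hcont _) ih
  have hext : ∀ n, ∃ g : C(K, ℝ), ∀ x ∈ D n, g x = F x := by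
    intro n
    obtain ⟨g, hg⟩ := ContinuousMap.exists_restrict_eq (hDclosed n)
      ⟨(D n).restrict F, continuousOn_iff_continuous_restrict.1 (hDcont n)⟩
    exact ⟨g, fun x hx => ContinuousMap.congr_fun hg ⟨x, hx⟩⟩
  choose g hg using hext
  refine ⟨fun n => g n, fun n => (g n).continuous, fun k => ?_⟩
  have hk : k ∈ ⋃ n, C n := hcov ▸ mem_univ k
  obtain ⟨m, hm⟩ := mem_iUnion.1 hk
  refine ⟨m, fun n hn => hg n k ?_⟩
  exact mem_biUnion (Finset.mem_range.2 (by omega)) hm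

/-- Pointwise stabilization gives a countable closed cover with continuous restrictions. -/
lemma closed_cover_of_stab_aux {K : Type*} [TopologicalSpace K] (F : K → ℝ)
    (h : PointwiseStabilizing F) :
    ∃ C : ℕ → Set K, (∀ n, IsClosed (C n)) ∧ (⋃ n, C n) = univ ∧
      ∀ n, ContinuousOn F (C n) := by
  obtain ⟨f, hf, hstab⟩ := h
  set E : ℕ → Set K := fun m => ⋂ (n) (_ : m ≤ n), {k | f n k = f m k} with hE
  have hEclosed : ∀ m, IsClosed (E m) := fun m =>
    isClosed_iInter fun n => isClosed_iInter fun _ => isClosed_eq (hf n) (hf m)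
  have hFeq : ∀ m, ∀ k ∈ E m, F k = f m k := by
    intro m k hk
    obtain ⟨m0, hm0⟩ := hstab k
    have h1 : f (max m m0) k = f m k := by
      have := mem_iInter.1 hk (max m m0)
      exact mem_iInter.1 this (le_max_left _ _)
    have h2 : f (max m m0) k = F k := hm0 _ (le_max_right _ _)
    rw [← h2, h1]
  refine ⟨E, hEclosed, ?_, fun m => ((hf m).continuousOn).congr (hFeq m)⟩
  ext k
  simp only [mem_iUnion, mem_univ, iff_true]
  obtain ⟨m, hm⟩ := hstab k
  refine ⟨m, mem_iInter.2 fun n => mem_iInter.2 fun hn => ?_⟩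
  show f n k = f m k
  rw [hm n hn, hm m le_rfl]

/-- Reindexing an Fσ cover into a closed cover. -/
lemma cover_reindex_aux {K : Type*} [TopologicalSpace K] (F : K → ℝ) (V : ℕ → Set K)
    (hV : ∀ i, IsFsigma (V i)) (hcov : (⋃ i, V i) = univ)
    (hcont : ∀ i, ContinuousOn F (V i)) :
    ∃ C : ℕ → Set K, (∀ n, IsClosed (C n)) ∧ (⋃ n, C n) = univ ∧
      ∀ n, ContinuousOn F (C n) := by
  choose G hGclosed hGeq using hV
  let e : ℕ ≃ ℕ × ℕ := (Denumerable.eqv (ℕ × ℕ)).symm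
  refine ⟨fun n => G (e n).1 (e n).2, fun n => hGclosed _ _, ?_, fun n =>
    (hcont _).mono (by rw [hGeq]; exact subset_iUnion _ _)⟩
  ext k
  simp only [mem_iUnion, mem_univ, iff_true]
  have hk : k ∈ ⋃ i, V i := hcov ▸ mem_univ k
  obtain ⟨i, hi⟩ := mem_iUnion.1 hk
  rw [hGeq i] at hi
  obtain ⟨j, hj⟩ := mem_iUnion.1 hi
  exact ⟨e.symm (i, j), by simpa using hj⟩

theorem differences_semicontinuous_stmt_2
    {K : Type*} [TopologicalSpace K] [PolishSpace K] (F : K → ℝ) (hF : BaireOne F) :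
    (PointwiseStabilizing F ↔
      ∃ V : ℕ → Set K, (∀ i, ∃ C D : Set K, IsClosed C ∧ IsClosed D ∧ V i = C \ D) ∧
        (⋃ i, V i) = Set.univ ∧ ∀ i, Continuous ((V i).restrict F)) ∧
    (PointwiseStabilizing F ↔
      ∃ V : ℕ → Set K, (∀ i, IsAmbiguous (V i)) ∧
        (⋃ i, V i) = Set.univ ∧ ∀ i, Continuous ((V i).restrict F)) := by
  letI := TopologicalSpace.upgradeIsCompletelyMetrizable K
  constructor
  · constructor
    · intro h
      obtain ⟨C, hCc, hcov, hcont⟩ := closed_cover_of_stab_aux F h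
      refine ⟨fun i => C i \ ∅, fun i => ⟨C i, ∅, hCc i, isClosed_empty, rfl⟩, ?_, fun i => ?_⟩
      · simpa [diff_empty] using hcov
      · show Continuous ((C i \ ∅).restrict F)
        rw [diff_empty]
        exact continuousOn_iff_continuous_restrict.1 (hcont i)
    · rintro ⟨V, hVdiff, hcov, hcont⟩
      have hfs : ∀ i, IsFsigma (V i) := by
        intro i
        obtain ⟨C, D, hC, hD, hVeq⟩ := hVdiff i
        obtain ⟨G, hGc, hGeq⟩ := isFsigma_of_isOpen_aux hD.isOpen_compl
        exact ⟨fun n => C ∩ G n, fun n => hC.inter (hGc n),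
          by rw [hVeq, diff_eq, hGeq, inter_iUnion]⟩
      obtain ⟨C, hCc, hcov', hcont'⟩ := cover_reindex_aux F V hfs hcov
        (fun i => continuousOn_iff_continuous_restrict.2 (hcont i))
      exact stab_of_closed_cover_aux F C hCc hcov' hcont'
  · constructor
    · intro h
      obtain ⟨C, hCc, hcov, hcont⟩ := closed_cover_of_stab_aux F h
      refine ⟨C, fun i => ⟨⟨fun _ => C i, fun _ => hCc i, (iUnion_const _).symm⟩,
        (hCc i).isGδ⟩, hcov, fun i =>
        continuousOn_iff_continuous_restrict.1 (hcont i)⟩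
    · rintro ⟨V, hVamb, hcov, hcont⟩
      obtain ⟨C, hCc, hcov', hcont'⟩ := cover_reindex_aux F V (fun i => (hVamb i).1) hcov
        (fun i => continuousOn_iff_continuous_restrict.2 (hcont i))
      exact stab_of_closed_cover_aux F C hCc hcov' hcont'
end

section
/- Let K be a countable Polish space. Then every function F : K → ℝ is pointwise stabilizing, and hence is a difference of semi-continuous functions (F ∈ DSC(K)). -/
open Filter Topology Set

theorem differences_semicontinuous_stmt_3
    {K : Type*} [TopologicalSpace K] [PolishSpace K] [Countable K] (F : K → ℝ) :
    PointwiseStabilizing F ∧ DSC F := by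
  letI := TopologicalSpace.upgradeIsCompletelyMetrizable K
  -- obtain a stabilizing sequence
  have key : ∃ f : ℕ → K → ℝ, (∀ n, Continuous (f n)) ∧ ∀ k, ∃ m, ∀ n ≥ m, f n k = F k := by
    rcases isEmpty_or_nonempty K with hK | hK
    · exact ⟨fun _ => F, fun n => ⟨fun s _ => by
        convert isOpen_empty using 1; exact eq_empty_of_isEmpty _⟩,
        fun k => isEmptyElim k⟩
    · obtain ⟨e, he⟩ := exists_surjective_nat K
      have hext : ∀ n : ℕ, ∃ g : K → ℝ, Continuous g ∧ ∀ i < n, g (e i) = F (e i) := by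
        intro n
        set s : Set K := e '' (Set.Iio n) with hs
        have hfin : s.Finite := (Set.finite_Iio n).image e
        haveI : Finite ↥s := hfin.to_subtype
        have hcl : IsClosed s := hfin.isClosed
        obtain ⟨g, hg⟩ := ContinuousMap.exists_restrict_eq (Y := ℝ) hcl
          ⟨fun x => F x, continuous_of_discreteTopology⟩
        refine ⟨g, g.continuous, fun i hi => ?_⟩
        have : (g.restrict s) ⟨e i, ⟨i, hi, rfl⟩⟩ = F (e i) := by
          rw [hg]; rfl
        simpa using this
      choose g hgc hgeq using hext
      refine ⟨g, hgc, fun k => ?_⟩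
      obtain ⟨i, rfl⟩ := he k
      exact ⟨i + 1, fun n hn => hgeq n i (by omega)⟩
  obtain ⟨f, hfc, hstab⟩ := key
  refine ⟨⟨f, hfc, hstab⟩, f, hfc, ?_, ?_⟩
  · intro x
    obtain ⟨m, hm⟩ := hstab x
    exact tendsto_const_nhds.congr' (eventually_atTop.2 ⟨m, fun n hn => (hm n hn).symm⟩)
  · intro x
    obtain ⟨m, hm⟩ := hstab x
    apply summable_of_ne_finset_zero (s := Finset.range m)
    intro n hn
    rw [Finset.mem_range, not_lt] at hn
    rw [hm (n + 1) (by omega), hm n hn, sub_self, abs_zero]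
end

section
/- Let K be a Polish space and F : K → ℝ a function of the first Baire class whose range F(K) is a discrete subset of ℝ (no point of F(K) is a cluster point of F(K)). Then F is pointwise stabilizing. -/
open Filter Topology Set

/-- An auxiliary "plateau" function: it equals `d` on `[d - r, d + r]`, equals `x`
outside `[d - 2r, d + 2r]`, and interpolates linearly (slope 2) in between. -/
noncomputable def tentD (r d x : ℝ) : ℝ :=
  max (min (2*x - d + 2*r) d) (max (min (2*x - d - 2*r) x) (min x d))

lemma tentD_lip (r d x y : ℝ) : |tentD r d x - tentD r d y| ≤ 2 * |x - y| := by
  unfold tentD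
  have e1 : |(2*x - d + 2*r) - (2*y - d + 2*r)| = 2 * |x - y| := by
    rw [show (2*x - d + 2*r) - (2*y - d + 2*r) = 2*(x - y) by ring, abs_mul]
    norm_num
  have e2 : |(2*x - d - 2*r) - (2*y - d - 2*r)| = 2 * |x - y| := by
    rw [show (2*x - d - 2*r) - (2*y - d - 2*r) = 2*(x - y) by ring, abs_mul]
    norm_num
  have hxy : |x - y| ≤ 2 * |x - y| := by nlinarith [abs_nonneg (x - y)]
  calc |max (min (2*x - d + 2*r) d) (max (min (2*x - d - 2*r) x) (min x d))
        - max (min (2*y - d + 2*r) d) (max (min (2*y - d - 2*r) y) (min y d))|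
      ≤ max |min (2*x - d + 2*r) d - min (2*y - d + 2*r) d|
          |(max (min (2*x - d - 2*r) x) (min x d)) - (max (min (2*y - d - 2*r) y) (min y d))| :=
        abs_max_sub_max_le_max _ _ _ _
    _ ≤ 2 * |x - y| := by
        apply max_le
        · exact le_trans (abs_min_sub_min_le_max _ _ _ _)
            (max_le (le_of_eq e1) (by simpa using hxy.trans_eq' (by simp)))
        · refine le_trans (abs_max_sub_max_le_max _ _ _ _) (max_le ?_ ?_)
          · exact le_trans (abs_min_sub_min_le_max _ _ _ _)
              (max_le (le_of_eq e2) hxy)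
          · exact le_trans (abs_min_sub_min_le_max _ _ _ _)
              (max_le hxy (by simpa using hxy.trans_eq' (by simp)))

lemma tentD_plateau {r d x : ℝ} (hr : 0 < r) (hx : |x - d| ≤ r) : tentD r d x = d := by
  rw [abs_le] at hx
  unfold tentD
  have hA : min (2*x - d + 2*r) d = d := min_eq_right (by linarith [hx.1])
  have hB : min (2*x - d - 2*r) x ≤ d := le_trans (min_le_left _ _) (by linarith [hx.2])
  have hC : min x d ≤ d := min_le_right _ _
  rw [hA, max_eq_left (max_le hB hC)]

lemma tentD_eq_self {r d x : ℝ} (hr : 0 < r) (hx : 2 * r ≤ |x - d|) : tentD r d x = x := by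
  unfold tentD
  rcases le_abs.mp hx with h | h
  · -- x ≥ d + 2r
    have hA : min (2*x - d + 2*r) d = d := min_eq_right (by linarith)
    have hB : min (2*x - d - 2*r) x = x := min_eq_right (by linarith)
    have hC : min x d = d := min_eq_right (by linarith)
    rw [hA, hB, hC]
    have h1 : max x d = x := max_eq_left (by linarith)
    rw [h1]
    exact max_eq_right (by linarith)
  · -- x ≤ d - 2r
    have hA : min (2*x - d + 2*r) d = 2*x - d + 2*r := min_eq_left (by linarith)
    have hB : min (2*x - d - 2*r) x = 2*x - d - 2*r := min_eq_left (by linarith)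
    have hC : min x d = x := min_eq_left (by linarith)
    rw [hA, hB, hC]
    have h1 : max (2*x - d - 2*r) x = x := max_eq_right (by linarith)
    rw [h1]
    exact max_eq_right (by linarith)

lemma tentD_bound {r d : ℝ} (x : ℝ) (hr : 0 < r) : |tentD r d x - x| ≤ r := by
  rw [abs_le]
  constructor
  · -- x - r ≤ tentD
    have key : x - r ≤ tentD r d x := by
      unfold tentD
      rcases le_total x (d + r) with h | h
      · have : x - r ≤ min x d := le_min (by linarith) (by
          rcases le_total x d with h2 | h2
          · linarith
          · linarith)
        exact le_trans this (le_trans (le_max_right _ _) (le_max_right _ _))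
      · have : x - r ≤ min (2*x - d - 2*r) x := le_min (by linarith) (by linarith)
        exact le_trans this (le_trans (le_max_left _ _) (le_max_right _ _))
    linarith
  · -- tentD ≤ x + r
    show tentD r d x - x ≤ r
    rw [sub_le_iff_le_add]
    unfold tentD
    apply max_le
    · rcases le_total d (x + r) with h | h
      · exact le_trans (min_le_right _ _) (by linarith)
      · exact le_trans (min_le_left _ _) (by linarith)
    · apply max_le
      · exact le_trans (min_le_right _ _) (by linarith)
      · exact le_trans (min_le_left _ _) (by linarith)

/-- Existence of a continuous function on ℝ which has a plateau of value `d` around each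
point `d` of a uniformly separated set `D`. -/
lemma exists_plateau (D : Set ℝ) (r : ℝ → ℝ) (hr : ∀ d ∈ D, 0 < r d)
    (hsep : ∀ d ∈ D, ∀ d' ∈ D, d ≠ d' → 6 * r d ≤ |d - d'|) :
    ∃ h : ℝ → ℝ, Continuous h ∧ ∀ d ∈ D, ∀ x, |x - d| ≤ r d → h x = d := by
  classical
  set P : ℝ → ℝ → Prop := fun x d => d ∈ D ∧ |x - d| < 5/2 * r d with hP
  have huniq : ∀ x d d', P x d → P x d' → d = d' := by
    rintro x d d' ⟨hd, hxd⟩ ⟨hd', hxd'⟩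
    by_contra hne
    have h1 := hsep d hd d' hd' hne
    have h2 := hsep d' hd' d hd (Ne.symm hne)
    rw [abs_sub_comm d' d] at h2
    have htri : |d - d'| ≤ |x - d| + |x - d'| := by
      calc |d - d'| = |(x - d') - (x - d)| := by ring_nf
        _ ≤ |x - d'| + |x - d| := abs_sub _ _
        _ = |x - d| + |x - d'| := by ring
    have hrd := hr d hd
    linarith
  set h : ℝ → ℝ := fun x => if hx : ∃ d, P x d then tentD (r hx.choose) hx.choose x else x
    with hh
  have hchoose : ∀ x d, P x d → h x = tentD (r d) d x := by
    intro x d hPd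
    have hex : ∃ d, P x d := ⟨d, hPd⟩
    have : hex.choose = d := huniq x _ _ hex.choose_spec hPd
    simp only [hh, dif_pos hex, this]
  have hbound : ∀ x y, |h x - h y| ≤ 3 * |x - y| := by
    intro x y
    by_cases hx : ∃ d, P x d
    · obtain ⟨d, hPd⟩ := hx
      have hdD := hPd.1
      have hrd := hr d hdD
      rw [hchoose x d hPd]
      by_cases hy : ∃ d', P y d'
      · obtain ⟨d', hPd'⟩ := hy
        have hd'D := hPd'.1
        have hrd' := hr d' hd'D
        rw [hchoose y d' hPd']
        by_cases hdd : d = d'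
        · subst hdd
          exact (tentD_lip _ _ _ _).trans (by nlinarith [abs_nonneg (x - y)])
        · have h1 := hsep d hdD d' hd'D hdd
          have h2 := hsep d' hd'D d hdD (Ne.symm hdd)
          rw [abs_sub_comm d' d] at h2
          have htri : |d - d'| ≤ |x - d| + |x - y| + |y - d'| := by
            calc |d - d'| = |(x - d') - (x - d)| := by ring_nf
              _ ≤ |x - d'| + |x - d| := abs_sub _ _
              _ ≤ (|x - y| + |y - d'|) + |x - d| := by
                  have : |x - d'| = |(x - y) + (y - d')| := by ring_nf
                  rw [this]
                  exact add_le_add_left (abs_add_le _ _) _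
              _ = |x - d| + |x - y| + |y - d'| := by ring
          have b1 := tentD_bound (d := d) x hrd
          have b2 := tentD_bound (d := d') y hrd'
          have htri2 : |tentD (r d) d x - tentD (r d') d' y|
              ≤ |tentD (r d) d x - x| + |x - y| + |tentD (r d') d' y - y| := by
            calc |tentD (r d) d x - tentD (r d') d' y|
                = |(tentD (r d) d x - x) + (x - y) + (y - tentD (r d') d' y)| := by ring_nf
              _ ≤ |(tentD (r d) d x - x) + (x - y)| + |y - tentD (r d') d' y| := abs_add_le _ _
              _ ≤ |tentD (r d) d x - x| + |x - y| + |y - tentD (r d') d' y| := by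
                  exact add_le_add_left (abs_add_le _ _) _
              _ = |tentD (r d) d x - x| + |x - y| + |tentD (r d') d' y - y| := by
                  rw [abs_sub_comm y]
          have hxd := hPd.2
          have hyd' := hPd'.2
          linarith
      · -- y not in any zone
        have hyd : ¬ |y - d| < 5/2 * r d := fun hcon => hy ⟨d, hdD, hcon⟩
        push_neg at hyd
        have hyy : h y = y := by simp only [hh, dif_neg hy]
        have hlip := tentD_lip (r d) d x y
        rw [tentD_eq_self hrd (le_trans (by linarith) hyd)] at hlip
        rw [hyy]
        nlinarith [abs_nonneg (x - y)]
    · have hxx : h x = x := by simp only [hh, dif_neg hx]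
      by_cases hy : ∃ d', P y d'
      · obtain ⟨d', hPd'⟩ := hy
        have hd'D := hPd'.1
        have hrd' := hr d' hd'D
        have hxd' : ¬ |x - d'| < 5/2 * r d' := fun hcon => hx ⟨d', hd'D, hcon⟩
        push_neg at hxd'
        have hlip := tentD_lip (r d') d' x y
        rw [tentD_eq_self hrd' (le_trans (by linarith) hxd')] at hlip
        rw [hxx, hchoose y d' hPd']
        nlinarith [abs_nonneg (x - y)]
      · have hyy : h y = y := by simp only [hh, dif_neg hy]
        rw [hxx, hyy]
        nlinarith [abs_nonneg (x - y)]
  refine ⟨h, ?_, ?_⟩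
  · refine LipschitzWith.continuous (K := 3) (LipschitzWith.of_dist_le_mul fun x y => ?_)
    simpa [Real.dist_eq] using hbound x y
  · intro d hd x hx
    have hrd := hr d hd
    have hPd : P x d := ⟨hd, by linarith [hx]⟩
    rw [hchoose x d hPd]
    exact tentD_plateau hrd hx

theorem differences_semicontinuous_stmt_4
    {K : Type*} [TopologicalSpace K] [PolishSpace K] (F : K → ℝ) (hF : BaireOne F)
    (hdisc : ∀ y ∈ Set.range F, ∃ ε > 0, ∀ z ∈ Set.range F, |z - y| < ε → z = y) :
    PointwiseStabilizing F := by
  classical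
  obtain ⟨f, hfc, hft⟩ := hF
  choose! ε hεpos hεsep using hdisc
  set r : ℝ → ℝ := fun d => ε d / 6 with hrdef
  have hr : ∀ d ∈ Set.range F, 0 < r d := fun d hd => by
    have := hεpos d hd; simp only [hrdef]; linarith
  have hsep : ∀ d ∈ Set.range F, ∀ d' ∈ Set.range F, d ≠ d' → 6 * r d ≤ |d - d'| := by
    intro d hd d' hd' hne
    by_contra hlt
    push_neg at hlt
    apply hne
    have : |d' - d| < ε d := by
      rw [abs_sub_comm]
      simp only [hrdef] at hlt
      linarith
    exact (hεsep d hd d' hd' this).symm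
  obtain ⟨h, hc, hplat⟩ := exists_plateau (Set.range F) r hr hsep
  refine ⟨fun n => h ∘ f n, fun n => hc.comp (hfc n), fun k => ?_⟩
  have hmem : F k ∈ Set.range F := Set.mem_range_self k
  obtain ⟨N, hN⟩ := Metric.tendsto_atTop.mp (hft k) (r (F k)) (hr _ hmem)
  refine ⟨N, fun n hn => ?_⟩
  apply hplat (F k) hmem
  rw [← Real.dist_eq]
  exact le_of_lt (hN n hn)
end

section
/- The function f = Σ_{j=1}^∞ 2^{-j}·χ_{{d_j}}, where (d_j) is an enumeration of a countable dense subset of [0,1], belongs to DBSC([0,1]) with ‖f‖_D ≤ 2, its range is the convergent sequence {0} ∪ {2^{-j} : j ≥ 1}, but f is not pointwise stabilizing on [0,1]. -/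
open Filter Topology Set

noncomputable def Dnorm {X : Type*} [TopologicalSpace X] (f : X → ℝ) : ℝ :=
  sInf {C : ℝ | ∃ φ : ℕ → X → ℝ, (∀ n, Continuous (φ n)) ∧
    (∀ x, HasSum (fun n => φ n x) (f x)) ∧ ∀ x, ∑' n, |φ n x| ≤ C}


abbrev II := Set.Icc (0:ℝ) 1

noncomputable def tent (y : II) (n : ℕ) (x : II) : ℝ := max 0 (1 - 2^n * |(x:ℝ) - (y:ℝ)|)

lemma tent_cont (y : II) (n : ℕ) : Continuous (tent y n) :=
  continuous_const.max ((continuous_const.sub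
    (continuous_const.mul ((continuous_subtype_val.sub continuous_const).abs))))

lemma tent_nonneg (y : II) (n : ℕ) (x : II) : 0 ≤ tent y n x := le_max_left _ _

lemma tent_le_one (y : II) (n : ℕ) (x : II) : tent y n x ≤ 1 := by
  apply max_le (by norm_num)
  have : 0 ≤ 2^n * |(x:ℝ) - (y:ℝ)| := by positivity
  linarith

lemma tent_self (y : II) (n : ℕ) : tent y n y = 1 := by
  simp [tent]

lemma tent_anti (y : II) (n : ℕ) (x : II) : tent y (n+1) x ≤ tent y n x := by
  apply max_le_max le_rfl
  have : (2:ℝ)^n * |(x:ℝ) - (y:ℝ)| ≤ 2^(n+1) * |(x:ℝ) - (y:ℝ)| := by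
    apply mul_le_mul_of_nonneg_right _ (abs_nonneg _)
    exact pow_le_pow_right₀ (by norm_num) (Nat.le_succ n)
  linarith

lemma tent_tendsto (y x : II) :
    Tendsto (fun n => tent y n x) atTop (𝓝 (if x = y then 1 else 0)) := by
  by_cases h : x = y
  · simp [h, tent_self]
  · simp only [h, if_false]
    have hxy : 0 < |(x:ℝ) - (y:ℝ)| := by
      rw [abs_pos, sub_ne_zero]
      exact fun hh => h (Subtype.ext hh)
    have : ∀ᶠ n in atTop, tent y n x = 0 := by
      have h2 : Tendsto (fun n : ℕ => (2:ℝ)^n * |(x:ℝ) - (y:ℝ)|) atTop atTop :=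
        (tendsto_pow_atTop_atTop_of_one_lt (by norm_num)).atTop_mul_const hxy
      filter_upwards [h2.eventually_ge_atTop 1] with n hn
      simp only [tent, max_eq_left_iff]
      linarith
    exact tendsto_const_nhds.congr' (this.mono fun n hn => hn.symm)

noncomputable def row (y : II) : ℕ → II → ℝ
  | 0 => tent y 0
  | (n+1) => fun x => tent y (n+1) x - tent y n x

lemma row_cont (y : II) (n : ℕ) : Continuous (row y n) := by
  cases n with
  | zero => exact tent_cont y 0
  | succ n => exact (tent_cont y (n+1)).sub (tent_cont y n)

lemma row_abs_sum (y x : II) (N : ℕ) :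
    ∑ i ∈ Finset.range (N+1), |row y i x| = 2 * tent y 0 x - tent y N x := by
  induction N with
  | zero => simp [row, abs_of_nonneg (tent_nonneg y 0 x)]; ring
  | succ N ih =>
      rw [Finset.sum_range_succ, ih]
      have : |row y (N+1) x| = tent y N x - tent y (N+1) x := by
        rw [show row y (N+1) x = tent y (N+1) x - tent y N x from rfl,
          abs_of_nonpos (by linarith [tent_anti y N x])]
        ring
      rw [this]; ring

lemma row_sum (y x : II) (N : ℕ) :
    ∑ i ∈ Finset.range (N+1), row y i x = tent y N x := by
  induction N with
  | zero => simp [row]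
  | succ N ih =>
      rw [Finset.sum_range_succ, ih, show row y (N+1) x = tent y (N+1) x - tent y N x from rfl]
      ring

lemma row_abs_hasSum (y x : II) :
    HasSum (fun n => |row y n x|) (2 * tent y 0 x - (if x = y then 1 else 0)) := by
  rw [hasSum_iff_tendsto_nat_of_nonneg (fun i => abs_nonneg _)]
  rw [← tendsto_add_atTop_iff_nat 1]
  have : (fun N => ∑ i ∈ Finset.range (N+1), |row y i x|)
      = fun N => 2 * tent y 0 x - tent y N x := funext fun N => row_abs_sum y x N
  rw [this]
  exact tendsto_const_nhds.sub (tent_tendsto y x)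

lemma row_hasSum (y x : II) :
    HasSum (fun n => row y n x) (if x = y then 1 else 0) := by
  have hs : Summable (fun n => row y n x) := (row_abs_hasSum y x).summable.of_abs
  have h1 := hs.hasSum.tendsto_sum_nat
  have h2 : Tendsto (fun N => ∑ i ∈ Finset.range N, row y i x) atTop
      (𝓝 (if x = y then 1 else 0)) := by
    rw [← tendsto_add_atTop_iff_nat 1]
    have : (fun N => ∑ i ∈ Finset.range (N+1), row y i x) = fun N => tent y N x :=
      funext fun N => row_sum y x N
    rw [this]; exact tent_tendsto y x
  have h3 := hs.hasSum
  rwa [tendsto_nhds_unique h1 h2] at h3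

noncomputable def w (j : ℕ) : ℝ := (2:ℝ)^(-(j+1:ℤ))

lemma w_eq (j : ℕ) : w j = (1/2:ℝ)^(j+1) := by
  rw [w, zpow_neg, one_div, inv_pow, ← zpow_natCast]
  norm_num

lemma w_pos (j : ℕ) : 0 < w j := by rw [w_eq]; positivity

lemma w_summable : Summable w := by
  have : w = fun j => (1/2:ℝ) * (1/2)^j := by
    funext j; rw [w_eq, pow_succ]; ring
  rw [this]; exact summable_geometric_two.mul_left _

lemma w_tsum : ∑' j, w j = 1 := by
  have : w = fun j => (1/2:ℝ) * (1/2)^j := by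
    funext j; rw [w_eq, pow_succ]; ring
  rw [this, tsum_mul_left, tsum_geometric_two]; norm_num

set_option maxHeartbeats 1000000 in
lemma main_construction (d : ℕ → II) (hinj : Function.Injective d)
    (f : II → ℝ)
    (hf : ∀ x, f x = ∑' j : ℕ, if x = d j then (2:ℝ)^(-(j+1 : ℤ)) else 0) :
    ∃ φ : ℕ → II → ℝ, (∀ n, Continuous (φ n)) ∧
      (∀ x, HasSum (fun n => φ n x) (f x)) ∧ ∀ x, ∑' n, |φ n x| ≤ 2 := by
  set Φ : ℕ × ℕ → II → ℝ := fun p x => w p.1 * row (d p.1) p.2 x with hΦ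
  have habs : ∀ (x : II) (j : ℕ), HasSum (fun n => |Φ (j,n) x|)
      (w j * (2 * tent (d j) 0 x - (if x = d j then 1 else 0))) := by
    intro x j
    have h := (row_abs_hasSum (d j) x).mul_left (w j)
    convert h using 2 with n
    · rfl
    rw [hΦ, abs_mul, abs_of_pos (w_pos j)]
  have hb1 : ∀ (x : II) (j : ℕ),
      0 ≤ 2 * tent (d j) 0 x - (if x = d j then 1 else 0) := by
    intro x j
    have := tent_nonneg (d j) 0 x
    by_cases h : x = d j
    · simp only [h, if_pos rfl]; rw [h] at *; rw [tent_self]; norm_num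
    · simp [h]; linarith
  have hb2 : ∀ (x : II) (j : ℕ),
      2 * tent (d j) 0 x - (if x = d j then 1 else 0) ≤ 2 := by
    intro x j
    have h1 := tent_le_one (d j) 0 x
    split <;> norm_num <;> linarith
  have hrowsum : ∀ x, Summable (fun j => w j * (2 * tent (d j) 0 x - (if x = d j then 1 else 0))) := by
    intro x
    apply Summable.of_nonneg_of_le
      (fun j => mul_nonneg (w_pos j).le (hb1 x j))
      (fun j => ?_) (w_summable.mul_left 2)
    calc w j * (2 * tent (d j) 0 x - (if x = d j then 1 else 0)) ≤ w j * 2 :=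
          mul_le_mul_of_nonneg_left (hb2 x j) (w_pos j).le
      _ = 2 * w j := by ring
  have hsumabs : ∀ x, Summable (fun p => |Φ p x|) := by
    intro x
    refine (summable_prod_of_nonneg fun p => abs_nonneg _).2 ⟨fun j => (habs x j).summable, ?_⟩
    have : (fun j => ∑' n, |Φ (j, n) x|) =
        fun j => w j * (2 * tent (d j) 0 x - (if x = d j then 1 else 0)) :=
      funext fun j => (habs x j).tsum_eq
    rw [this]; exact hrowsum x
  have hfib : ∀ (x : II) (j : ℕ), HasSum (fun n => Φ (j,n) x)
      (if x = d j then w j else 0) := by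
    intro x j
    have h := (row_hasSum (d j) x).mul_left (w j)
    convert h using 1
    · rfl
    split <;> simp
  have hHS : ∀ x, HasSum (fun p => Φ p x) (f x) := by
    intro x
    have hs : Summable (fun p => Φ p x) := (hsumabs x).of_abs
    have hS := hs.hasSum
    have hrow := hS.prod_fiberwise (hfib x)
    have : f x = ∑' p, Φ p x := by
      rw [hf x, ← hrow.tsum_eq]
      exact tsum_congr fun j => by norm_num [w]
    rwa [← this] at hS
  have habs_tsum : ∀ x, ∑' p, |Φ p x| ≤ 2 := by
    intro x
    rw [Summable.tsum_prod' (hsumabs x) (fun j => (habs x j).summable)]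
    have heq : (fun j => ∑' n, |Φ (j, n) x|) =
        fun j => w j * (2 * tent (d j) 0 x - (if x = d j then 1 else 0)) :=
      funext fun j => (habs x j).tsum_eq
    rw [heq]
    calc ∑' j, w j * (2 * tent (d j) 0 x - (if x = d j then 1 else 0))
        ≤ ∑' j, 2 * w j := by
          apply Summable.tsum_le_tsum _ (hrowsum x) (w_summable.mul_left 2)
          intro j
          calc w j * (2 * tent (d j) 0 x - (if x = d j then 1 else 0)) ≤ w j * 2 :=
                mul_le_mul_of_nonneg_left (hb2 x j) (w_pos j).le
            _ = 2 * w j := by ring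
      _ = 2 := by rw [tsum_mul_left, w_tsum]; norm_num
  let e : ℕ ≃ ℕ × ℕ := Nat.pairEquiv.symm
  refine ⟨fun n => Φ (e n), fun n => ?_, fun x => ?_, fun x => ?_⟩
  · exact continuous_const.mul (row_cont _ _)
  · exact (Equiv.hasSum_iff (α := ℝ) (f := fun p => Φ p x) e).2 (hHS x)
  · have : ∑' n, |Φ (e n) x| = ∑' p, |Φ p x| := e.tsum_eq (fun p => |Φ p x|)
    rw [this]; exact habs_tsum x

lemma II_not_countable : ¬ Countable II := by
  intro h
  have h2 := Cardinal.mk_le_aleph0_iff.2 h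
  rw [Cardinal.mk_Icc_real (by norm_num : (0:ℝ) < 1)] at h2
  exact absurd h2 (not_le.2 Cardinal.aleph0_lt_continuum)

lemma exists_not_mem_of_isOpen (V : Set II) (hV : IsOpen V) (hne : V.Nonempty)
    (s : Set II) (hs : s.Countable) : ∃ z ∈ V, z ∉ s := by
  by_contra hc
  push_neg at hc
  have hVc : V.Countable := (hs.mono hc)
  have himg : ((Subtype.val : II → ℝ) '' V).Countable := hVc.image _
  obtain ⟨W, hW, hWV⟩ := isOpen_induced_iff.1 hV
  have himage : (Subtype.val : II → ℝ) '' V = Set.Icc (0:ℝ) 1 ∩ W := by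
    rw [← hWV]; exact Subtype.image_preimage_coe _ _
  obtain ⟨x0, hx0⟩ := hne
  have hxmem : (x0 : ℝ) ∈ Set.Icc (0:ℝ) 1 ∩ W := by
    rw [← himage]; exact ⟨x0, hx0, rfl⟩
  obtain ⟨⟨hx0l, hx0r⟩, hxW⟩ := hxmem
  obtain ⟨ε, hε, hball⟩ := Metric.isOpen_iff.1 hW _ hxW
  -- construct a nontrivial interval inside Icc 0 1 ∩ W
  have key : ∃ a b : ℝ, a < b ∧ Set.Icc a b ⊆ Set.Icc (0:ℝ) 1 ∩ W := by
    by_cases hx : (x0:ℝ) < 1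
    · refine ⟨x0, min 1 ((x0:ℝ) + ε/2), lt_min hx (by linarith), fun z hz => ?_⟩
      obtain ⟨hz1, hz2⟩ := hz
      have hzb1 : z ≤ 1 := hz2.trans (min_le_left _ _)
      have hzb2 : z ≤ (x0:ℝ) + ε/2 := hz2.trans (min_le_right _ _)
      refine ⟨⟨le_trans hx0l hz1, hzb1⟩, hball ?_⟩
      rw [Metric.mem_ball, Real.dist_eq, abs_of_nonneg (by linarith)]
      linarith
    · have hx1 : (x0:ℝ) = 1 := le_antisymm hx0r (not_lt.1 hx)
      refine ⟨max 0 (1 - ε/2), 1, max_lt (by norm_num) (by linarith), fun z hz => ?_⟩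
      obtain ⟨hz1, hz2⟩ := hz
      have hza : (0:ℝ) ≤ z := le_trans (le_max_left _ _) hz1
      have hzb : 1 - ε/2 ≤ z := le_trans (le_max_right _ _) hz1
      refine ⟨⟨hza, hz2⟩, hball ?_⟩
      rw [Metric.mem_ball, Real.dist_eq, hx1, abs_of_nonpos (by linarith)]
      linarith
  obtain ⟨a, b, hab, hsub⟩ := key
  have hIcc : (Set.Icc a b).Countable := by
    apply himg.mono
    rw [himage]; exact hsub
  have h2 := Cardinal.mk_le_aleph0_iff.2 (Set.countable_coe_iff.2 hIcc)
  rw [Cardinal.mk_Icc_real hab] at h2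
  exact absurd h2 (not_le.2 Cardinal.aleph0_lt_continuum)

lemma f_at_d (d : ℕ → II) (hinj : Function.Injective d) (f : II → ℝ)
    (hf : ∀ x, f x = ∑' j : ℕ, if x = d j then (2:ℝ)^(-(j+1 : ℤ)) else 0) (j : ℕ) :
    f (d j) = w j := by
  rw [hf]
  have : (fun i => if d j = d i then (2:ℝ)^(-(i+1 : ℤ)) else 0)
      = fun i => if i = j then w j else 0 := by
    funext i
    by_cases h : i = j
    · subst h; simp [w]
    · rw [if_neg h, if_neg]
      intro hh
      exact h (hinj hh.symm)
  rw [this, tsum_ite_eq]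

lemma f_not_d (d : ℕ → II) (f : II → ℝ)
    (hf : ∀ x, f x = ∑' j : ℕ, if x = d j then (2:ℝ)^(-(j+1 : ℤ)) else 0)
    (x : II) (hx : x ∉ Set.range d) : f x = 0 := by
  rw [hf]
  convert tsum_zero with j
  rw [if_neg]
  intro h
  exact hx ⟨j, h.symm⟩

lemma not_stab (d : ℕ → II) (hinj : Function.Injective d) (hdense : DenseRange d)
    (f : II → ℝ)
    (hf : ∀ x, f x = ∑' j : ℕ, if x = d j then (2:ℝ)^(-(j+1 : ℤ)) else 0) :
    ¬ (∃ g : ℕ → II → ℝ, (∀ n, Continuous (g n)) ∧ ∀ k, ∃ m, ∀ n ≥ m, g n k = f k) := by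
  rintro ⟨g, hgc, hst⟩
  set A : ℕ → Set II := fun m => ⋂ n, {x | g (n + m) x = g m x} with hA
  have hclosed : ∀ m, IsClosed (A m) :=
    fun m => isClosed_iInter fun n => isClosed_eq (hgc (n + m)) (hgc m)
  have hunion : ⋃ m, A m = Set.univ := by
    apply Set.eq_univ_of_forall
    intro x
    obtain ⟨m, hm⟩ := hst x
    refine Set.mem_iUnion.2 ⟨m, Set.mem_iInter.2 fun n => ?_⟩
    have h1 : g (n + m) x = f x := hm _ (Nat.le_add_left m n)
    have h2 : g m x = f x := hm _ le_rfl
    simp only [Set.mem_setOf_eq, h1, h2]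
  have hmem : ∀ m x, x ∈ A m → g m x = f x := by
    intro m x hx
    obtain ⟨m', hm'⟩ := hst x
    have h1 : g (m' + m) x = g m x := Set.mem_iInter.1 hx m'
    have h2 : g (m' + m) x = f x := hm' _ (Nat.le_add_right m' m)
    rw [← h1, h2]
  have : Nonempty II := ⟨d 0⟩
  obtain ⟨m, hm⟩ := nonempty_interior_of_iUnion_of_closed hclosed hunion
  obtain ⟨j, hj⟩ := hdense.exists_mem_open isOpen_interior hm
  have hyA : d j ∈ A m := interior_subset hj
  have hfy : f (d j) = w j := f_at_d d hinj f hf j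
  have hg : g m (d j) = w j := by rw [hmem m _ hyA, hfy]
  set V : Set II := interior (A m) ∩ {z | 0 < g m z} with hV
  have hVopen : IsOpen V := isOpen_interior.inter (isOpen_lt continuous_const (hgc m))
  have hVne : V.Nonempty := ⟨d j, hj, by simp only [Set.mem_setOf_eq, hg]; exact w_pos j⟩
  obtain ⟨z, hzV, hz⟩ := exists_not_mem_of_isOpen V hVopen hVne (Set.range d)
    (Set.countable_range d)
  have hz0 : f z = 0 := f_not_d d f hf z hz
  have : g m z = 0 := by rw [hmem m z (interior_subset hzV.1), hz0]
  have h2 : (0:ℝ) < g m z := hzV.2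
  linarith

theorem differences_semicontinuous_stmt_7
    (d : ℕ → Set.Icc (0:ℝ) 1) (hinj : Function.Injective d) (hdense : DenseRange d)
    (f : Set.Icc (0:ℝ) 1 → ℝ)
    (hf : ∀ x, f x = ∑' j : ℕ, if x = d j then (2:ℝ)^(-(j+1 : ℤ)) else 0) :
    DBSC f ∧ Dnorm f ≤ 2 ∧
      Set.range f = {0} ∪ {x : ℝ | ∃ j : ℕ, x = (2:ℝ)^(-(j+1 : ℤ))} ∧
      ¬ PointwiseStabilizing f := by
  obtain ⟨φ, hφc, hφs, hφb⟩ := main_construction d hinj f hf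
  have hmem2 : (2:ℝ) ∈ {C : ℝ | ∃ φ : ℕ → II → ℝ, (∀ n, Continuous (φ n)) ∧
      (∀ x, HasSum (fun n => φ n x) (f x)) ∧ ∀ x, ∑' n, |φ n x| ≤ C} := ⟨φ, hφc, hφs, hφb⟩
  refine ⟨⟨φ, 2, hφc, hφs, hφb⟩, ?_, ?_, ?_⟩
  · refine csInf_le ⟨0, fun C hC => ?_⟩ hmem2
    obtain ⟨ψ, hc, hs, hb⟩ := hC
    exact le_trans (tsum_nonneg fun n => abs_nonneg _) (hb (d 0))
  · ext y
    constructor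
    · rintro ⟨x, rfl⟩
      by_cases hx : x ∈ Set.range d
      · obtain ⟨j, rfl⟩ := hx
        exact Or.inr ⟨j, (f_at_d d hinj f hf j).trans rfl⟩
      · exact Or.inl (f_not_d d f hf x hx)
    · rintro (h0 | ⟨j, hj⟩)
      · have hex : ∃ x : II, x ∉ Set.range d := by
          by_contra hc
          push_neg at hc
          have huniv : (Set.univ : Set II) = Set.range d :=
            (Set.eq_univ_of_forall hc).symm
          exact II_not_countable (Set.countable_univ_iff.1
            (huniv ▸ Set.countable_range d))
        obtain ⟨x, hx⟩ := hex
        refine ⟨x, ?_⟩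
        rw [f_not_d d f hf x hx]
        exact h0.symm
      · refine ⟨d j, ?_⟩
        rw [f_at_d d hinj f hf j, hj]
        rfl
  · exact not_stab d hinj hdense f hf
end

section
/- Let K be a Polish space and F : K → ℝ of the first Baire class. Then F is a uniform limit of step functions, i.e., of first Baire class functions with discrete range. In particular DSC(K) is uniformly dense in the first Baire class B₁(K). -/
open Filter Topology Set

open Metric in
/-- Given a countable cover by nonempty closed sets with attached values, the "first-index"
selection function is a pointwise-stabilizing limit of continuous functions. -/
lemma key_step {K : Type*} [MetricSpace K] (E : ℕ → Set K) (c : ℕ → ℝ)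
    (hcl : ∀ n, IsClosed (E n)) (hne : ∀ n, (E n).Nonempty)
    (hcov : ∀ x, ∃ n, x ∈ E n) :
    ∃ g : K → ℝ,
      (∀ x, ∃ n, x ∈ E n ∧ g x = c n) ∧
      (∃ f : ℕ → K → ℝ, (∀ m, Continuous (f m)) ∧ ∀ x, ∃ M, ∀ m ≥ M, f m x = g x) := by
  classical
  set d : ℕ → K → ℝ := fun n x => infDist x (E n) with hd
  set f : ℕ → K → ℝ := fun m x =>
    ∑ n ∈ Finset.range (m + 1), c n *
      (max 0 (1 - (m : ℝ) * d n x) * ∏ i ∈ Finset.range n, min 1 ((m : ℝ) * d i x)) with hf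
  refine ⟨fun x => c (Nat.find (hcov x)),
    fun x => ⟨Nat.find (hcov x), Nat.find_spec (hcov x), rfl⟩, f, ?_, ?_⟩
  · intro m
    apply continuous_finset_sum
    intro n _
    exact continuous_const.mul
      ((continuous_const.max (continuous_const.sub
        (continuous_const.mul (continuous_infDist_pt _)))).mul
        (continuous_finset_prod _ fun i _ =>
          continuous_const.min (continuous_const.mul (continuous_infDist_pt _))))
  · intro x
    set N := Nat.find (hcov x) with hN
    have hxN : x ∈ E N := Nat.find_spec (hcov x)
    have hlt : ∀ i, i < N → x ∉ E i := fun i hi => Nat.find_min (hcov x) hi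
    have hdN : d N x = 0 := infDist_zero_of_mem hxN
    have hdpos : ∀ i, i < N → 0 < d i x := fun i hi =>
      ((hcl i).notMem_iff_infDist_pos (hne i)).mp (hlt i hi)
    refine ⟨max (N + 1) ((Finset.range N).sup fun i => ⌈1 / d i x⌉₊ + 1), fun m hm => ?_⟩
    have hmN : N < m := lt_of_lt_of_le (Nat.lt_succ_self N) (le_trans (le_max_left _ _) hm)
    have hbig : ∀ i, i < N → 1 ≤ (m : ℝ) * d i x := by
      intro i hi
      have h1 : ⌈1 / d i x⌉₊ + 1 ≤ m :=
        le_trans (le_trans (Finset.le_sup (f := fun i => ⌈1 / d i x⌉₊ + 1)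
          (Finset.mem_range.mpr hi)) (le_max_right _ _)) hm
      have h2 : (1 : ℝ) / d i x ≤ (m : ℝ) := by
        calc (1 : ℝ) / d i x ≤ ⌈1 / d i x⌉₊ := Nat.le_ceil _
        _ ≤ (m : ℝ) := by exact_mod_cast le_trans (Nat.le_succ _) h1
      exact (div_le_iff₀ (hdpos i hi)).mp h2
    rw [hf]
    simp only
    rw [Finset.sum_eq_single_of_mem N (Finset.mem_range.mpr (Nat.lt_succ_of_lt hmN))]
    · have h1 : max 0 (1 - (m : ℝ) * d N x) = 1 := by rw [hdN]; norm_num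
      have h2 : (∏ i ∈ Finset.range N, min 1 ((m : ℝ) * d i x)) = 1 := by
        apply Finset.prod_eq_one
        intro i hi
        exact min_eq_left (hbig i (Finset.mem_range.mp hi))
      rw [h1, h2]; ring
    · intro n hn hne'
      rcases lt_or_gt_of_ne hne' with hltN | hgtN
      · have : max 0 (1 - (m : ℝ) * d n x) = 0 :=
          max_eq_left (by have := hbig n hltN; linarith)
        rw [this]; ring
      · have : (∏ i ∈ Finset.range n, min 1 ((m : ℝ) * d i x)) = 0 := by
          apply Finset.prod_eq_zero (Finset.mem_range.mpr hgtN)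
          rw [hdN]; norm_num
        rw [this]; ring

/-- The main approximation lemma: a Baire-one function can be uniformly approximated by a
pointwise-stabilizing limit of continuous functions taking values in the lattice (ε/2)·ℤ. -/
lemma main_approx {K : Type*} [TopologicalSpace K] [PolishSpace K] (F : K → ℝ)
    (hF : BaireOne F) (ε : ℝ) (hε : 0 < ε) :
    ∃ g : K → ℝ,
      (∃ fs : ℕ → K → ℝ, (∀ m, Continuous (fs m)) ∧ ∀ x, ∃ M, ∀ m ≥ M, fs m x = g x) ∧
      (∀ x, ∃ z : ℤ, g x = (ε / 2) * z) ∧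
      (∀ x, |F x - g x| ≤ ε) := by
  classical
  cases isEmpty_or_nonempty K with
  | inl h =>
    exact ⟨fun _ => 0, ⟨fun _ _ => 0, fun _ => continuous_const, fun x => (h.false x).elim⟩,
      fun x => (h.false x).elim, fun x => (h.false x).elim⟩
  | inr h =>
    letI := TopologicalSpace.upgradeIsCompletelyMetrizable K
    obtain ⟨f, hfc, hfl⟩ := hF
    -- the closed pieces
    set D : ℤ × ℕ × ℕ → Set K := fun p =>
      ⋂ k, ⋂ (_ : p.2.2 ≤ k), {x | |f k x - ε / 2 * p.1| ≤ ε / 2 - 1 / (p.2.1 + 1)} with hD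
    have hDcl : ∀ p, IsClosed (D p) := by
      intro p
      apply isClosed_iInter; intro k; apply isClosed_iInter; intro _
      have : Continuous fun x => |f k x - ε / 2 * p.1| :=
        ((hfc k).sub continuous_const).abs
      exact isClosed_le this continuous_const
    have hDval : ∀ p x, x ∈ D p → |F x - ε / 2 * p.1| ≤ ε := by
      intro p x hx
      have htd : Tendsto (fun k => |f k x - ε / 2 * p.1|) atTop (𝓝 |F x - ε / 2 * p.1|) :=
        ((hfl x).sub tendsto_const_nhds).abs
      refine le_of_tendsto htd ?_
      filter_upwards [eventually_ge_atTop p.2.2] with k hk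
      have hx' : |f k x - ε / 2 * p.1| ≤ ε / 2 - 1 / (p.2.1 + 1) := by
        have := Set.mem_iInter.mp hx k
        exact Set.mem_iInter.mp this hk
      have hp : (0:ℝ) < 1 / (p.2.1 + 1) := by positivity
      linarith
    have hDcov : ∀ x, ∃ p, x ∈ D p := by
      intro x
      obtain ⟨n, hn⟩ := exists_nat_one_div_lt (show (0:ℝ) < ε / 8 by linarith)
      obtain ⟨m, hm⟩ := Metric.tendsto_atTop.mp (hfl x) (ε / 8) (by linarith)
      refine ⟨(round (F x / (ε / 2)), n, m), ?_⟩
      have hround : |F x / (ε / 2) - round (F x / (ε / 2))| ≤ 1 / 2 := abs_sub_round _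
      have hε2 : (0:ℝ) < ε / 2 := by linarith
      have hr : |F x - ε / 2 * round (F x / (ε / 2))| ≤ ε / 4 := by
        calc |F x - ε / 2 * round (F x / (ε / 2))|
            = |ε / 2 * (F x / (ε / 2) - round (F x / (ε / 2)))| := by
              congr 1; field_simp
        _ ≤ ε / 2 * (1 / 2) := by
              rw [abs_mul, abs_of_pos hε2]
              exact mul_le_mul_of_nonneg_left hround (le_of_lt hε2)
        _ = ε / 4 := by ring
      simp only [hD, Set.mem_iInter, Set.mem_setOf_eq]
      intro k hk
      have h1 : dist (f k x) (F x) < ε / 8 := hm k hk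
      rw [Real.dist_eq] at h1
      have h2 : |f k x - ε / 2 * round (F x / (ε / 2))| ≤ ε / 8 + ε / 4 := by
        calc |f k x - ε / 2 * round (F x / (ε / 2))|
            ≤ |f k x - F x| + |F x - ε / 2 * round (F x / (ε / 2))| := abs_sub_le _ _ _
        _ ≤ ε / 8 + ε / 4 := by linarith [le_of_lt h1]
      have h3 : 1 / ((n:ℝ) + 1) < ε / 8 := hn
      linarith
    -- make all sets nonempty
    obtain ⟨p₀, hp₀⟩ := hDcov (Classical.arbitrary K)
    have hD₀ne : (D p₀).Nonempty := ⟨_, hp₀⟩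
    set e : ℕ → ℤ × ℕ × ℕ := fun n => (Denumerable.eqv (ℤ × ℕ × ℕ)).symm n with he
    set E : ℕ → Set K := fun n => if (D (e n)).Nonempty then D (e n) else D p₀ with hE
    set c : ℕ → ℝ := fun n => if (D (e n)).Nonempty then ε / 2 * (e n).1 else ε / 2 * p₀.1
      with hc
    have hEcl : ∀ n, IsClosed (E n) := by
      intro n; rw [hE]; dsimp only; split_ifs <;> exact hDcl _
    have hEne : ∀ n, (E n).Nonempty := by
      intro n; rw [hE]; dsimp only; split_ifs with h' <;> [exact h'; exact hD₀ne]
    have hEcov : ∀ x, ∃ n, x ∈ E n := by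
      intro x
      obtain ⟨p, hp⟩ := hDcov x
      refine ⟨Denumerable.eqv (ℤ × ℕ × ℕ) p, ?_⟩
      have hep : e (Denumerable.eqv (ℤ × ℕ × ℕ) p) = p := Equiv.symm_apply_apply _ _
      rw [hE]
      simp only [hep]
      rw [if_pos ⟨x, hp⟩]
      exact hp
    have hEval : ∀ n x, x ∈ E n → |F x - c n| ≤ ε := by
      intro n x hx
      rw [hE] at hx; rw [hc]
      dsimp only at hx ⊢
      split_ifs at hx ⊢ with h'
      · exact hDval _ x hx
      · exact hDval _ x hx
    have hclat : ∀ n, ∃ z : ℤ, c n = ε / 2 * z := by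
      intro n; rw [hc]; dsimp only; split_ifs
      · exact ⟨(e n).1, rfl⟩
      · exact ⟨p₀.1, rfl⟩
    obtain ⟨g, hg1, hg2⟩ := key_step E c hEcl hEne hEcov
    refine ⟨g, hg2, ?_, ?_⟩
    · intro x
      obtain ⟨n, _, hgn⟩ := hg1 x
      obtain ⟨z, hz⟩ := hclat n
      exact ⟨z, hgn.trans hz⟩
    · intro x
      obtain ⟨n, hxn, hgn⟩ := hg1 x
      rw [hgn]
      exact hEval n x hxn

theorem differences_semicontinuous_stmt_8
    {K : Type*} [TopologicalSpace K] [PolishSpace K] (F : K → ℝ) (hF : BaireOne F) :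
    (∀ ε : ℝ, 0 < ε → ∃ g : K → ℝ, BaireOne g ∧
        (∀ y ∈ Set.range g, ∃ δ > 0, ∀ z ∈ Set.range g, |z - y| < δ → z = y) ∧
        ∀ x, |F x - g x| ≤ ε) ∧
    (∀ ε : ℝ, 0 < ε → ∃ g : K → ℝ, DSC g ∧ ∀ x, |F x - g x| ≤ ε) := by
  have tendsto_of_stab : ∀ (fs : ℕ → K → ℝ) (g : K → ℝ) (x : K),
      (∃ M, ∀ m ≥ M, fs m x = g x) → Tendsto (fun m => fs m x) atTop (𝓝 (g x)) := by
    intro fs g x ⟨M, hM⟩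
    refine Tendsto.congr' ?_ (tendsto_const_nhds (x := g x))
    filter_upwards [eventually_ge_atTop M] with m hm
    exact (hM m hm).symm
  constructor
  · intro ε hε
    obtain ⟨g, ⟨fs, hfs, hstab⟩, hlat, hbound⟩ := main_approx F hF ε hε
    refine ⟨g, ⟨fs, hfs, fun x => tendsto_of_stab fs g x (hstab x)⟩, ?_, hbound⟩
    intro y hy
    refine ⟨ε / 2, by linarith, ?_⟩
    intro w hw hd
    obtain ⟨x₁, hx₁⟩ := hy
    obtain ⟨x₂, hx₂⟩ := hw
    obtain ⟨z₁, hz₁⟩ := hlat x₁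
    obtain ⟨z₂, hz₂⟩ := hlat x₂
    rw [← hx₁, ← hx₂, hz₁, hz₂] at hd ⊢
    have hε2 : (0:ℝ) < ε / 2 := by linarith
    have : |(z₂ : ℝ) - z₁| < 1 := by
      have h1 : ε / 2 * |(z₂ : ℝ) - z₁| < ε / 2 * 1 := by
        calc ε / 2 * |(z₂ : ℝ) - z₁| = |ε / 2 * z₂ - ε / 2 * z₁| := by
              rw [← mul_sub, abs_mul, abs_of_pos hε2]
        _ < ε / 2 := hd
        _ = ε / 2 * 1 := by ring
      exact lt_of_mul_lt_mul_left h1 (le_of_lt hε2)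
    have hz : z₂ = z₁ := by
      have h4 : |z₂ - z₁| < 1 := by exact_mod_cast this
      rw [abs_lt] at h4
      omega
    rw [hz]
  · intro ε hε
    obtain ⟨g, ⟨fs, hfs, hstab⟩, _, hbound⟩ := main_approx F hF ε hε
    refine ⟨g, ⟨fs, hfs, fun x => tendsto_of_stab fs g x (hstab x), ?_⟩, hbound⟩
    intro x
    obtain ⟨M, hM⟩ := hstab x
    apply summable_of_ne_finset_zero (s := Finset.range M)
    intro n hn
    rw [Finset.mem_range, not_lt] at hn
    rw [hM (n + 1) (le_trans hn (Nat.le_succ n)), hM n hn, sub_self, abs_zero]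
end

section
/- Given sets G ⊂ F ⊂ K in a Polish space K, with G a Gδ set and F an Fσ set, there exists an ambiguous set A (both Fσ and Gδ) with G ⊂ A ⊂ F. -/
open Filter Topology Set

lemma IsClosed.isFsigma' {X : Type*} [TopologicalSpace X] {s : Set X} (hs : IsClosed s) :
    IsFsigma s :=
  ⟨fun _ => s, fun _ => hs, (iUnion_const s).symm⟩

lemma isFsigma_iUnion {X : Type*} [TopologicalSpace X] {f : ℕ → Set X}
    (hf : ∀ n, IsFsigma (f n)) : IsFsigma (⋃ n, f n) := by
  choose g hgcl hgeq using hf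
  refine ⟨fun n => g (Nat.unpair n).1 (Nat.unpair n).2, fun n => hgcl _ _, ?_⟩
  ext x
  simp only [mem_iUnion, hgeq]
  constructor
  · rintro ⟨i, j, hx⟩; exact ⟨Nat.pair i j, by simp [hx]⟩
  · rintro ⟨n, hx⟩; exact ⟨_, _, hx⟩

lemma IsFsigma.inter_closed {X : Type*} [TopologicalSpace X] {s t : Set X}
    (hs : IsFsigma s) (ht : IsClosed t) : IsFsigma (s ∩ t) := by
  obtain ⟨f, hf, rfl⟩ := hs
  exact ⟨fun n => f n ∩ t, fun n => (hf n).inter ht, by rw [iUnion_inter]⟩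

lemma isFsigma_of_isOpen {X : Type*} [MetricSpace X] {s : Set X} (hs : IsOpen s) :
    IsFsigma s := by
  obtain ⟨f, hf, hfeq⟩ := (hs.isClosed_compl.isGδ).eq_iInter_nat
  refine ⟨fun n => (f n)ᶜ, fun n => (hf n).isClosed_compl, ?_⟩
  rw [← compl_iInter, ← hfeq, compl_compl]

lemma isGδ_of_compl_isFsigma {X : Type*} [TopologicalSpace X] {s : Set X}
    (hs : IsFsigma sᶜ) : IsGδ s := by
  obtain ⟨f, hf, hfeq⟩ := hs
  have : s = ⋂ n, (f n)ᶜ := by rw [← compl_iUnion, ← hfeq, compl_compl]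
  rw [this]
  exact .iInter_of_isOpen fun n => (hf n).isOpen_compl

theorem differences_semicontinuous_stmt_9
    {K : Type*} [TopologicalSpace K] [PolishSpace K] (G F : Set K)
    (hGF : G ⊆ F) (hG : IsGδ G) (hF : IsFsigma F) :
    ∃ A : Set K, IsAmbiguous A ∧ G ⊆ A ∧ A ⊆ F := by
  classical
  letI := TopologicalSpace.upgradeIsCompletelyMetrizable K
  obtain ⟨Fs, hFscl, hFeq⟩ := hF
  obtain ⟨Us, hUsop, hGeq⟩ := hG.eq_iInter_nat
  set C : ℕ → Set K := fun n => if n % 2 = 0 then Fs (n / 2) else (Us (n / 2))ᶜ with hC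
  have hC2 : ∀ n, C (2 * n) = Fs n := by
    intro n
    have h1 : (2 * n) % 2 = 0 := by omega
    have h2 : (2 * n) / 2 = n := by omega
    simp [hC, h1, h2]
  have hC2' : ∀ n, C (2 * n + 1) = (Us n)ᶜ := by
    intro n
    have h1 : (2 * n + 1) % 2 = 1 := by omega
    have h2 : (2 * n + 1) / 2 = n := by omega
    simp [hC, h1, h2]
  have hCcl : ∀ n, IsClosed (C n) := by
    intro n
    simp only [hC]
    split_ifs
    exacts [hFscl _, (hUsop _).isClosed_compl]
  have hcover : ∀ x : K, ∃ n, x ∈ C n := by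
    intro x
    by_cases hx : x ∈ G
    · obtain ⟨m, hm⟩ := mem_iUnion.1 (hFeq ▸ hGF hx : x ∈ ⋃ n, Fs n)
      exact ⟨2 * m, by rwa [hC2]⟩
    · rw [hGeq] at hx
      simp only [mem_iInter, not_forall] at hx
      obtain ⟨m, hm⟩ := hx
      exact ⟨2 * m + 1, by rwa [hC2']⟩
  set D : ℕ → Set K := fun n => C n \ ⋃ m ∈ Finset.range n, C m with hD
  have hopen : ∀ n, IsOpen (⋃ m ∈ Finset.range n, C m)ᶜ := by
    intro n
    exact (isClosed_biUnion_finset fun m _ => hCcl m).isOpen_compl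
  -- membership in D characterized by Nat.find
  have hmemD : ∀ x (m : ℕ), x ∈ D m ↔ m = Nat.find (hcover x) := by
    intro x m
    constructor
    · rintro ⟨hxm, hxn⟩
      simp only [Finset.mem_range, mem_iUnion, not_exists] at hxn
      have h1 : Nat.find (hcover x) ≤ m := Nat.find_le hxm
      rcases lt_or_eq_of_le h1 with h | h
      · exact absurd (Nat.find_spec (hcover x)) (hxn _ h)
      · exact h.symm
    · rintro rfl
      refine ⟨Nat.find_spec (hcover x), ?_⟩
      simp only [Finset.mem_range, mem_iUnion, not_exists]
      intro m hm
      exact Nat.find_min (hcover x) hm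
  refine ⟨⋃ n, D (2 * n), ⟨?_, ?_⟩, ?_, ?_⟩
  · -- Fsigma
    refine isFsigma_iUnion fun n => ?_
    have : D (2 * n) = (⋃ m ∈ Finset.range (2 * n), C m)ᶜ ∩ C (2 * n) := by
      rw [hD]; ext x; simp [mem_diff, and_comm]
    rw [this]
    exact (isFsigma_of_isOpen (hopen _)).inter_closed (hCcl _)
  · -- Gδ: complement is ⋃ n, D (2n+1)
    refine isGδ_of_compl_isFsigma ?_
    have hcompl : (⋃ n, D (2 * n))ᶜ = ⋃ n, D (2 * n + 1) := by
      ext x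
      simp only [mem_compl_iff, mem_iUnion, not_exists, hmemD x]
      constructor
      · intro h
        rcases Nat.even_or_odd (Nat.find (hcover x)) with ⟨k, hk⟩ | ⟨k, hk⟩
        · exact absurd (by omega : 2 * k = Nat.find (hcover x)) (h k)
        · exact ⟨k, by omega⟩
      · rintro ⟨k, hk⟩ m hm
        omega
    rw [hcompl]
    refine isFsigma_iUnion fun n => ?_
    have : D (2 * n + 1) = (⋃ m ∈ Finset.range (2 * n + 1), C m)ᶜ ∩ C (2 * n + 1) := by
      rw [hD]; ext x; simp [mem_diff, and_comm]
    rw [this]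
    exact (isFsigma_of_isOpen (hopen _)).inter_closed (hCcl _)
  · -- G ⊆ A
    intro x hx
    have hNodd : ∀ k, Nat.find (hcover x) ≠ 2 * k + 1 := by
      intro k hk
      have := Nat.find_spec (hcover x)
      rw [hk, hC2'] at this
      exact this (by rw [hGeq] at hx; exact mem_iInter.1 hx k)
    obtain ⟨k, hk⟩ | ⟨k, hk⟩ := Nat.even_or_odd (Nat.find (hcover x))
    · simp only [mem_iUnion, hmemD x]
      exact ⟨k, by omega⟩
    · exact absurd (by omega) (hNodd k)
  · -- A ⊆ F
    intro x hx
    simp only [mem_iUnion] at hx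
    obtain ⟨n, hn⟩ := hx
    have : x ∈ C (2 * n) := hn.1
    rw [hC2] at this
    rw [hFeq]
    exact mem_iUnion.2 ⟨n, this⟩
end

section
/- Let K be a perfect Polish space, U a non-empty open subset of K, and λ ∈ ℝ. Then the set B_{U,λ} of bounded first Baire class functions f on K admitting continuous bounded φ_n with Σ φ_n = f pointwise and Σ |φ_n(t)| ≤ λ for all t ∈ U, is of first category in B₁ᵇ(K) (with the sup norm). -/
open Filter Topology Set

open scoped ENNReal

open Metric

section DBSCHelpers

def GoodPt {X : Type*} [TopologicalSpace X] (V Ep Em : Set X) : ℕ → X → Prop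
  | 0, x => x ∈ V
  | (j+1), x => x ∈ V ∧ ∀ W ∈ 𝓝 x, ∃ u v : X, u ∈ Ep ∧ v ∈ Em ∧ u ∈ W ∧ v ∈ W ∧
      GoodPt V Ep Em j u ∧ GoodPt V Ep Em j v



lemma BaireOne.add' {X : Type*} [TopologicalSpace X] {f g : X → ℝ}
    (hf : BaireOne f) (hg : BaireOne g) : BaireOne (fun x => f x + g x) := by
  obtain ⟨u, hu, hul⟩ := hf
  obtain ⟨v, hv, hvl⟩ := hg
  exact ⟨fun n x => u n x + v n x, fun n => (hu n).add (hv n), fun x => (hul x).add (hvl x)⟩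

lemma exists_pos_forall_le {r : ℕ → ℝ} (m : ℕ) (h : ∀ i < m, 0 < r i) :
    ∃ ε > 0, ∀ i < m, ε ≤ r i := by
  induction m with
  | zero => exact ⟨1, one_pos, by omega⟩
  | succ n ih =>
    obtain ⟨ε, hε, hall⟩ := ih (fun i hi => h i (by omega))
    refine ⟨min ε (r n), lt_min hε (h n (by omega)), fun i hi => ?_⟩
    rcases Nat.lt_succ_iff_lt_or_eq.1 hi with h' | rfl
    · exact le_trans (min_le_left _ _) (hall i h')
    · exact min_le_right _ _

open Classical in
lemma baireOne_indicator {X : Type*} [MetricSpace X] {Ep E : Set X} (c : ℝ)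
    (hsub : Ep ⊆ E) (hE : IsClosed E) (hEc : E.Countable) (hne : Ep.Nonempty)
    {z : X} (hz : z ∉ E) :
    BaireOne (fun t => if t ∈ Ep then c else 0) := by
  obtain ⟨e, he⟩ := (hEc.mono hsub).exists_eq_range hne
  set M : Set X := (E \ Ep) ∪ {z} with hM
  have hMc : M.Countable := (hEc.mono diff_subset).union (countable_singleton z)
  obtain ⟨m, hm⟩ := hMc.exists_eq_range ⟨z, Or.inr rfl⟩
  set F : ℕ → Set X := fun n => e '' {k | k ≤ n} with hF
  set G : ℕ → Set X := fun n => {t | 1 / (n + 1 : ℝ) ≤ infDist t E} ∪ m '' {k | k ≤ n} with hG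
  have hFcl : ∀ n, IsClosed (F n) := fun n =>
    (Set.Finite.image e (Set.finite_Iic n)).isClosed
  have hGcl : ∀ n, IsClosed (G n) := fun n =>
    ((isClosed_le continuous_const (continuous_infDist_pt E)).union
      (Set.Finite.image m (Set.finite_Iic n)).isClosed)
  have hFne : ∀ n, (F n).Nonempty := fun n => ⟨e 0, ⟨0, Nat.zero_le n, rfl⟩⟩
  have hGne : ∀ n, (G n).Nonempty := fun n => ⟨m 0, Or.inr ⟨0, Nat.zero_le n, rfl⟩⟩
  have hFsub : ∀ n, F n ⊆ Ep := by
    rintro n t ⟨k, _, rfl⟩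
    rw [he]; exact ⟨k, rfl⟩
  have hMsub : M ⊆ Eᶜ ∪ (E \ Ep) := by
    rintro t (ht | ht)
    · exact Or.inr ht
    · rw [mem_singleton_iff] at ht; subst ht; exact Or.inl hz
  have hGEp : ∀ n, Disjoint (G n) Ep := by
    intro n
    rw [Set.disjoint_left]
    rintro t (ht | ⟨k, _, rfl⟩) htp
    · have h0 : infDist t E = 0 := infDist_zero_of_mem (hsub htp)
      have ht' : 1 / (n + 1 : ℝ) ≤ infDist t E := ht
      rw [h0] at ht'
      have : (0:ℝ) < 1 / (n + 1 : ℝ) := by positivity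
      linarith
    · have := hMsub (by rw [hm]; exact ⟨k, rfl⟩)
      rcases this with h' | h'
      · exact h' (hsub htp)
      · exact h'.2 htp
  have hdisj : ∀ n, Disjoint (F n) (G n) := by
    intro n
    rw [Set.disjoint_left]
    intro t ht ht'
    exact Set.disjoint_left.1 (hGEp n) ht' (hFsub n ht)
  have hdenom : ∀ n t, 0 < infDist t (F n) + infDist t (G n) := by
    intro n t
    have h1 : (0:ℝ) ≤ infDist t (F n) := infDist_nonneg
    have h2 : (0:ℝ) ≤ infDist t (G n) := infDist_nonneg
    rcases h1.lt_or_eq with h1' | h1'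
    · linarith
    rcases h2.lt_or_eq with h2' | h2'
    · linarith
    exfalso
    have ht1 : t ∈ F n := ((hFcl n).mem_iff_infDist_zero (hFne n)).2 h1'.symm
    have ht2 : t ∈ G n := ((hGcl n).mem_iff_infDist_zero (hGne n)).2 h2'.symm
    exact Set.disjoint_left.1 (hdisj n) ht1 ht2
  refine ⟨fun n t => c * (infDist t (G n) / (infDist t (F n) + infDist t (G n))), ?_, ?_⟩
  · intro n
    exact continuous_const.mul ((continuous_infDist_pt (G n)).div
      ((continuous_infDist_pt (F n)).add (continuous_infDist_pt (G n)))
      (fun t => (hdenom n t).ne'))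
  · intro t
    by_cases ht : t ∈ Ep
    · simp only [if_pos ht]
      obtain ⟨k, hk⟩ : ∃ k, e k = t := by rw [he] at ht; exact ht
      apply tendsto_atTop_of_eventually_const (i₀ := k)
      intro n hn
      have htF : t ∈ F n := ⟨k, hn, hk⟩
      have h1 : infDist t (F n) = 0 := infDist_zero_of_mem htF
      have h2 : 0 < infDist t (G n) := by
        rw [← (hGcl n).notMem_iff_infDist_pos (hGne n)]
        exact fun h => Set.disjoint_left.1 (hGEp n) h ht
      rw [h1, zero_add, div_self h2.ne', mul_one]
    · simp only [if_neg ht]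
      have hGin : ∃ n₀, t ∈ G n₀ := by
        by_cases htE : t ∈ E
        · have : t ∈ M := Or.inl ⟨htE, ht⟩
          rw [hm] at this
          obtain ⟨k, hk⟩ := this
          exact ⟨k, Or.inr ⟨k, le_refl k, hk⟩⟩
        · have hpos : 0 < infDist t E := by
            rw [← hE.notMem_iff_infDist_pos ⟨e 0, hsub (by rw [he]; exact ⟨0, rfl⟩)⟩]
            exact htE
          obtain ⟨n, hn⟩ := exists_nat_one_div_lt hpos
          refine ⟨n, Or.inl ?_⟩
          show 1 / (n + 1 : ℝ) ≤ infDist t E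
          have : 1 / ((n:ℝ) + 1) < infDist t E := by exact_mod_cast hn
          linarith
      obtain ⟨n₀, hn₀⟩ := hGin
      have hGmono : ∀ p q, p ≤ q → G p ⊆ G q := by
        rintro p q hpq s (hs | ⟨k, hk, rfl⟩)
        · left
          have hs' : 1 / (p + 1 : ℝ) ≤ infDist s E := hs
          show 1 / (q + 1 : ℝ) ≤ infDist s E
          refine le_trans ?_ hs'
          apply one_div_le_one_div_of_le (by positivity)
          have : (p:ℝ) ≤ q := Nat.cast_le.2 hpq
          linarith
        · exact Or.inr ⟨k, le_trans hk hpq, rfl⟩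
      apply tendsto_atTop_of_eventually_const (i₀ := n₀)
      intro n hn
      have h2 : infDist t (G n) = 0 := infDist_zero_of_mem (hGmono n₀ n hn hn₀)
      rw [h2, zero_div, mul_zero]


lemma goodPt_mem {X : Type*} [TopologicalSpace X] {V Ep Em : Set X} :
    ∀ {j : ℕ} {x : X}, GoodPt V Ep Em j x → x ∈ V := by
  intro j x h
  cases j with
  | zero => exact h
  | succ j => exact h.1

lemma goodPt_mono {X : Type*} [TopologicalSpace X] {V Ep Em Ep' Em' : Set X}
    (h1 : Ep ⊆ Ep') (h2 : Em ⊆ Em') :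
    ∀ {j : ℕ} {x : X}, GoodPt V Ep Em j x → GoodPt V Ep' Em' j x := by
  intro j
  induction j with
  | zero => intro x h; exact h
  | succ j ih =>
    rintro x ⟨hxV, hw⟩
    refine ⟨hxV, fun W hW => ?_⟩
    obtain ⟨u, v, hu, hv, huW, hvW, hgu, hgv⟩ := hw W hW
    exact ⟨u, v, h1 hu, h2 hv, huW, hvW, ih hgu, ih hgv⟩

lemma variation_lemma {X : Type*} [TopologicalSpace X] {V Ep Em : Set X} {f : X → ℝ}
    {φ : ℕ → X → ℝ} (hφc : ∀ n, Continuous (φ n))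
    (hsum : ∀ t, HasSum (fun n => φ n t) (f t))
    {ε δ : ℝ} (hδ : 0 < δ) (hgap : ∀ u ∈ Ep, ∀ v ∈ Em, ε ≤ |f u - f v|) :
    ∀ (j : ℕ) (x : X), GoodPt V Ep Em j x → ∀ (m₀ : ℕ) (W : Set X), W ∈ 𝓝 x →
      ∃ w ∈ V, w ∈ W ∧ ∃ m₁, m₀ ≤ m₁ ∧
        (j : ℝ) * (ε / 2 - 2 * δ) ≤ ∑ n ∈ Finset.Ico m₀ m₁, |φ n w| := by
  intro j
  induction j with
  | zero =>
    intro x hx m₀ W hW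
    exact ⟨x, hx, mem_of_mem_nhds hW, m₀, le_refl _, by simp⟩
  | succ j ih =>
    rintro x ⟨hxV, hwit⟩ m₀ W hW
    set F : X → ℝ := fun t => ∑ n ∈ Finset.range m₀, φ n t with hFdef
    have hFc : Continuous F := continuous_finset_sum _ (fun n _ => hφc n)
    have hW₁open : IsOpen (interior W ∩ {t | |F t - F x| < δ / 2}) :=
      isOpen_interior.inter (isOpen_lt (hFc.sub continuous_const).abs continuous_const)
    have hxW₁ : x ∈ interior W ∩ {t | |F t - F x| < δ / 2} :=
      ⟨mem_interior_iff_mem_nhds.2 hW, by simp [hδ]⟩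
    obtain ⟨u, v, huEp, hvEm, huW₁, hvW₁, hgu, hgv⟩ :=
      hwit _ (hW₁open.mem_nhds hxW₁)
    have hFuv : |F u - F v| < δ := by
      have h1 := huW₁.2
      have h2 := hvW₁.2
      calc |F u - F v| ≤ |F u - F x| + |F x - F v| := abs_sub_le _ _ _
        _ < δ / 2 + δ / 2 := by rw [abs_sub_comm (F x) (F v)]; exact add_lt_add h1 h2
        _ = δ := by ring
    have hgap' : ε - δ ≤ |f u - F u| + |f v - F v| := by
      have h := hgap u huEp v hvEm
      have : |f u - f v| ≤ |f u - F u| + |F u - F v| + |F v - f v| := by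
        calc |f u - f v| = |(f u - F u) + (F u - F v) + (F v - f v)| := by ring_nf
          _ ≤ |f u - F u| + |F u - F v| + |F v - f v| := by
              exact le_trans (abs_add_le _ _) (by linarith [abs_add_le (f u - F u) (F u - F v)])
        
      rw [abs_sub_comm (F v) (f v)] at this
      linarith
    -- pick the point p with large discrepancy
    obtain ⟨p, hpG, hpW, hpB⟩ : ∃ p, GoodPt V Ep Em j p ∧ p ∈ interior W ∧
        (ε - δ) / 2 ≤ |f p - F p| := by
      rcases le_total ((ε - δ) / 2) (|f u - F u|) with h | h
      · exact ⟨u, hgu, huW₁.1, h⟩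
      · exact ⟨v, hgv, hvW₁.1, by linarith⟩
    have hpV : p ∈ V := goodPt_mem hpG
    -- choose m₁' with partial sum close to f p
    have htend : Tendsto (fun m => ∑ n ∈ Finset.range m, φ n p) atTop (𝓝 (f p)) :=
      (hsum p).tendsto_sum_nat
    obtain ⟨N, hN⟩ := (Metric.tendsto_atTop.1 htend) (δ / 2) (by linarith)
    set m₁' := max m₀ N with hm₁'
    have hNm : |∑ n ∈ Finset.range m₁', φ n p - f p| < δ / 2 := by
      have := hN m₁' (le_max_right _ _)
      rwa [Real.dist_eq] at this
    have hsum_lb : ε / 2 - δ ≤ ∑ n ∈ Finset.Ico m₀ m₁', |φ n p| := by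
      have h1 : |∑ n ∈ Finset.Ico m₀ m₁', φ n p| ≤ ∑ n ∈ Finset.Ico m₀ m₁', |φ n p| :=
        Finset.abs_sum_le_sum_abs _ _
      have h2 : ∑ n ∈ Finset.Ico m₀ m₁', φ n p
          = ∑ n ∈ Finset.range m₁', φ n p - ∑ n ∈ Finset.range m₀, φ n p := by
        rw [Finset.sum_Ico_eq_sub _ (le_max_left m₀ N)]
      have h3 : |f p - F p| - δ / 2 ≤ |∑ n ∈ Finset.range m₁', φ n p - F p| := by
        have habs : |f p - F p| ≤ |f p - ∑ n ∈ Finset.range m₁', φ n p|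
            + |∑ n ∈ Finset.range m₁', φ n p - F p| := by
          have heq : f p - F p = (f p - ∑ n ∈ Finset.range m₁', φ n p)
              + (∑ n ∈ Finset.range m₁', φ n p - F p) := by ring
          rw [heq]; exact abs_add_le _ _
        have h5 : |f p - ∑ n ∈ Finset.range m₁', φ n p| < δ / 2 := by
          rw [abs_sub_comm]; exact hNm
        linarith
      have h4 : (ε - δ) / 2 - δ / 2 ≤ |∑ n ∈ Finset.range m₁', φ n p - F p| := by
        linarith [hpB]
      calc ε / 2 - δ = (ε - δ) / 2 - δ / 2 := by ring
        _ ≤ |∑ n ∈ Finset.range m₁', φ n p - F p| := h4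
        _ = |∑ n ∈ Finset.Ico m₀ m₁', φ n p| := by rw [h2]
        _ ≤ _ := h1
    -- continuity neighborhood around p
    set G : X → ℝ := fun t => ∑ n ∈ Finset.Ico m₀ m₁', |φ n t| with hGdef
    have hGc : Continuous G := continuous_finset_sum _ (fun n _ => (hφc n).abs)
    have hW₂open : IsOpen (interior W ∩ {t | ε / 2 - 2 * δ < G t}) :=
      isOpen_interior.inter (isOpen_lt continuous_const hGc)
    have hpW₂ : p ∈ interior W ∩ {t | ε / 2 - 2 * δ < G t} :=
      ⟨hpW, by simp only [mem_setOf_eq]; linarith [hsum_lb]⟩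
    obtain ⟨w, hwV, hwW₂, m₁, hm₁le, hm₁sum⟩ :=
      ih p hpG m₁' _ (hW₂open.mem_nhds hpW₂)
    refine ⟨w, hwV, interior_subset hwW₂.1, m₁, le_trans (le_max_left _ _) hm₁le, ?_⟩
    have hsplit : ∑ n ∈ Finset.Ico m₀ m₁, |φ n w|
        = ∑ n ∈ Finset.Ico m₀ m₁', |φ n w| + ∑ n ∈ Finset.Ico m₁' m₁, |φ n w| := by
      rw [Finset.sum_Ico_consecutive _ (le_max_left m₀ N) hm₁le]
    have hGw : ε / 2 - 2 * δ < G w := hwW₂.2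
    push_cast
    rw [hsplit]
    have : (j : ℝ) * (ε / 2 - 2 * δ) ≤ ∑ n ∈ Finset.Ico m₁' m₁, |φ n w| := hm₁sum
    nlinarith [hGw]

lemma goodPt_mono' {X : Type*} [TopologicalSpace X] {V Ep Em Ep' Em' : Set X}
    (h1 : Ep ⊆ Ep') (h2 : Em ⊆ Em') :
    ∀ {j : ℕ} {x : X}, GoodPt V Ep Em j x → GoodPt V Ep' Em' j x := by
  intro j
  induction j with
  | zero => intro x h; exact h
  | succ j ih =>
    rintro x ⟨hxV, hw⟩
    refine ⟨hxV, fun W hW => ?_⟩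
    obtain ⟨u, v, hu, hv, huW, hvW, hgu, hgv⟩ := hw W hW
    exact ⟨u, v, h1 hu, h2 hv, huW, hvW, ih hgu, ih hgv⟩

lemma exists_pos_forall_le' {r : ℕ → ℝ} (m : ℕ) (h : ∀ i < m, 0 < r i) :
    ∃ ε > 0, ∀ i < m, ε ≤ r i := by
  induction m with
  | zero => exact ⟨1, one_pos, by omega⟩
  | succ n ih =>
    obtain ⟨ε, hε, hall⟩ := ih (fun i hi => h i (by omega))
    refine ⟨min ε (r n), lt_min hε (h n (by omega)), fun i hi => ?_⟩
    rcases Nat.lt_succ_iff_lt_or_eq.1 hi with h' | rfl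
    · exact le_trans (min_le_left _ _) (hall i h')
    · exact min_le_right _ _

lemma tree_exists {X : Type*} [MetricSpace X] {V : Set X}
    (hperf : ∀ (x : X) (η : ℝ), 0 < η → ∃ y : X, y ≠ x ∧ dist y x < η) :
    ∀ (j : ℕ) (W : Set X), IsOpen W → W.Nonempty → W ⊆ V → ∀ b : Bool,
    ∃ (Ep Em : Set X) (x : X), Ep.Countable ∧ Em.Countable ∧ IsClosed (Ep ∪ Em) ∧
      Ep ∪ Em ⊆ W ∧ Disjoint Ep Em ∧ x ∈ (bif b then Ep else Em) ∧ GoodPt V Ep Em j x := by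
  intro j
  induction j with
  | zero =>
    intro W hW hWne hWV b
    obtain ⟨x, hx⟩ := hWne
    cases b
    · refine ⟨∅, {x}, x, countable_empty, countable_singleton x, by simpa using isClosed_singleton,
        by simp [singleton_subset_iff.2 hx], by simp, by simp, hWV hx⟩
    · refine ⟨{x}, ∅, x, countable_singleton x, countable_empty, by simpa using isClosed_singleton,
        by simp [singleton_subset_iff.2 hx], by simp, by simp, hWV hx⟩
  | succ j ih =>
    intro W hW hWne hWV b
    obtain ⟨x, hxW⟩ := hWne
    obtain ⟨η₀, hη₀, hball⟩ := Metric.isOpen_iff.1 hW x hxW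
    choose pk hpk1 hpk2 using hperf
    let y : ℕ → {p : X // p ≠ x} := fun n => Nat.rec
      (⟨pk x (η₀ / 2) (by positivity), hpk1 x (η₀ / 2) (by positivity)⟩ : {p : X // p ≠ x})
      (fun _ prev => ⟨pk x (dist prev.1 x / 8)
          (by have := dist_pos.2 prev.2; positivity),
        hpk1 x _ _⟩) n
    let d : ℕ → ℝ := fun i => dist (y i).1 x
    have dpos : ∀ i, 0 < d i := fun i => dist_pos.2 (y i).2
    have hd0 : d 0 < η₀ / 2 := hpk2 x _ _
    have hds : ∀ i, d (i + 1) < d i / 8 := fun i => hpk2 x _ _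
    have dmono : ∀ i k, i ≤ k → d k ≤ d i := by
      intro i k
      induction k with
      | zero =>
        intro hik
        have : i = 0 := Nat.le_zero.1 hik
        subst this
        exact le_refl _
      | succ k ihk =>
        intro hik
        rcases eq_or_lt_of_le hik with heq | hlt
        · subst heq; exact le_refl _
        · have h1 := ihk (Nat.lt_succ_iff.1 hlt)
          have h2 := hds k
          have h3 := dpos k
          linarith
    have hgeo : ∀ i, d i ≤ d 0 / 2 ^ i := by
      intro i
      induction i with
      | zero => simp [d]
      | succ i ihi =>
        have h8 : d (i + 1) < d i / 8 := hds i
        have h2 : (d 0 / 2 ^ i) / 8 ≤ d 0 / 2 ^ (i + 1) := by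
          have e1 : d 0 / 2 ^ i / 8 = d 0 / (2 ^ i * 8) := by rw [div_div]
          have e2 : d 0 / 2 ^ (i + 1) = d 0 / (2 ^ i * 2) := by rw [pow_succ]
          rw [e1, e2]
          gcongr
          norm_num
        linarith
    have dsmall : ∀ ε : ℝ, 0 < ε → ∃ i, d i < ε := by
      intro ε hε
      obtain ⟨i, hi⟩ := pow_unbounded_of_one_lt (d 0 / ε) (by norm_num : (1:ℝ) < 2)
      refine ⟨i, ?_⟩
      have hp : (0:ℝ) < 2 ^ i := by positivity
      have h2 : d 0 / 2 ^ i < ε := by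
        rw [div_lt_iff₀ hp]
        rw [div_lt_iff₀ hε] at hi
        nlinarith
      linarith [hgeo i]
    let B : ℕ → Set X := fun i => ball (y i).1 (d i / 4)
    have hB2d : ∀ i w, w ∈ B i → dist w x < 2 * d i := by
      intro i w hw
      have h1 : dist w (y i).1 < d i / 4 := mem_ball.1 hw
      have h2 : dist w x ≤ dist w (y i).1 + d i := dist_triangle _ _ _
      have h3 := dpos i
      linarith
    have hBW : ∀ i, B i ⊆ W := by
      intro i w hw
      apply hball
      have := hB2d i w hw
      have hdm : d i ≤ d 0 := dmono 0 i (Nat.zero_le i)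
      simp only [mem_ball]
      linarith
    have hxB : ∀ i, x ∉ B i := by
      intro i hx'
      have h1 : dist x (y i).1 < d i / 4 := mem_ball.1 hx'
      rw [dist_comm] at h1
      have h2 : d i = dist (y i).1 x := rfl
      rw [← h2] at h1
      have h3 := dpos i
      linarith
    have d_eighth : ∀ i k, i < k → d k ≤ d i / 8 :=
      fun i k h => le_trans (dmono (i + 1) k h) (le_of_lt (hds i))
    have hBdisj : ∀ i k, i < k → ∀ w, w ∈ B i → w ∉ B k := by
      intro i k hik w hwi hwk
      have h1 : dist w (y i).1 < d i / 4 := mem_ball.1 hwi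
      have h2 : dist w (y k).1 < d k / 4 := mem_ball.1 hwk
      have h4 : dist (y i).1 x ≤ dist (y i).1 w + dist w (y k).1 + dist (y k).1 x :=
        dist_triangle4 _ _ _ _
      have h5 : d k ≤ d i / 8 := d_eighth i k hik
      rw [dist_comm (y i).1 w] at h4
      have h6 : d i = dist (y i).1 x := rfl
      have h7 : d k = dist (y k).1 x := rfl
      rw [← h6, ← h7] at h4
      have h8 := dpos i
      linarith
    have HH : ∀ (i : ℕ) (bb : Bool), ∃ (Ep Em : Set X) (xr : X), Ep.Countable ∧ Em.Countable ∧
        IsClosed (Ep ∪ Em) ∧ Ep ∪ Em ⊆ B i ∧ Disjoint Ep Em ∧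
        xr ∈ (bif bb then Ep else Em) ∧ GoodPt V Ep Em j xr :=
      fun i bb => ih (B i) isOpen_ball ⟨(y i).1, mem_ball_self (by have := dpos i; positivity)⟩
        (subset_trans (hBW i) hWV) bb
    choose EP EM XC h1 h2 h3 h4 h5 h6 h7 using HH
    let cl : ℕ → Bool := fun i => decide (i % 2 = 0)
    let A : ℕ → Set X := fun i => EP i (cl i) ∪ EM i (cl i)
    have hA_sub : ∀ i, A i ⊆ B i := fun i => h4 i (cl i)
    have hA_closed : ∀ i, IsClosed (A i) := fun i => h3 i (cl i)
    have hroot : ∀ i, XC i (cl i) ∈ A i := by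
      intro i
      have h := h6 i (cl i)
      show XC i (cl i) ∈ EP i (cl i) ∪ EM i (cl i)
      cases hcl : cl i
      · rw [hcl] at h
        simp only [Bool.cond_false] at h
        exact Or.inr h
      · rw [hcl] at h
        simp only [Bool.cond_true] at h
        exact Or.inl h
    set Ep₀ : Set X := ⋃ i, EP i (cl i) with hEp₀
    set Em₀ : Set X := ⋃ i, EM i (cl i) with hEm₀
    have hEpEm_union : Ep₀ ∪ Em₀ = ⋃ i, A i := (iUnion_union_distrib _ _).symm
    have hxA : ∀ i, x ∉ A i := fun i hx' => hxB i (hA_sub i hx')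
    have hxEp₀ : x ∉ Ep₀ := fun hx' => by
      obtain ⟨i, hi⟩ := mem_iUnion.1 hx'
      exact hxA i (Or.inl hi)
    have hxEm₀ : x ∉ Em₀ := fun hx' => by
      obtain ⟨i, hi⟩ := mem_iUnion.1 hx'
      exact hxA i (Or.inr hi)
    have hSclosed : IsClosed ({x} ∪ ⋃ i, A i) := by
      rw [← isOpen_compl_iff, Metric.isOpen_iff]
      intro z hz
      rw [mem_compl_iff] at hz
      have hzx : z ≠ x := by
        intro h
        subst h
        exact hz (Or.inl rfl)
      have hdz : 0 < dist z x := dist_pos.2 hzx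
      obtain ⟨i₀, hi₀⟩ := dsmall (dist z x / 4) (by positivity)
      have hzA : ∀ i, z ∉ A i := fun i hi => hz (Or.inr (mem_iUnion.2 ⟨i, hi⟩))
      have hApos : ∀ i, i < i₀ → 0 < infDist z (A i) := by
        intro i hi
        rw [← (hA_closed i).notMem_iff_infDist_pos ⟨XC i (cl i), hroot i⟩]
        exact hzA i
      obtain ⟨ε₁, hε₁, hεall⟩ := exists_pos_forall_le' i₀ hApos
      refine ⟨min (dist z x / 2) ε₁, lt_min (by positivity) hε₁, ?_⟩
      intro w hw
      rw [mem_ball] at hw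
      rw [mem_compl_iff]
      rintro (hwx | hwA)
      · rw [mem_singleton_iff] at hwx
        rw [hwx] at hw
        have h1 : dist x z < dist z x / 2 := lt_of_lt_of_le hw (min_le_left _ _)
        rw [dist_comm] at h1
        linarith
      · obtain ⟨i, hwi⟩ := mem_iUnion.1 hwA
        rcases lt_or_ge i i₀ with h' | h'
        · have ha : ε₁ ≤ infDist z (A i) := hεall i h'
          have hb : infDist z (A i) ≤ dist z w := infDist_le_dist_of_mem hwi
          have hc : dist w z < ε₁ := lt_of_lt_of_le hw (min_le_right _ _)
          rw [dist_comm] at hc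
          linarith
        · have h2d : dist w x < 2 * d i := hB2d i w (hA_sub i hwi)
          have hdm : d i ≤ d i₀ := dmono i₀ i h'
          have htri : dist z x ≤ dist z w + dist w x := dist_triangle _ _ _
          have hc : dist w z < dist z x / 2 := lt_of_lt_of_le hw (min_le_left _ _)
          rw [dist_comm] at hc
          linarith
    have hcross : ∀ i k a, i ≠ k → a ∈ A i → a ∉ A k := by
      intro i k a hik hai hak
      rcases Nat.lt_or_ge i k with h | h
      · exact hBdisj i k h a (hA_sub i hai) (hA_sub k hak)
      · exact hBdisj k i (by omega) a (hA_sub k hak) (hA_sub i hai)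
    have hdisj0 : Disjoint Ep₀ Em₀ := by
      rw [Set.disjoint_left]
      intro a ha ha'
      obtain ⟨i, hi⟩ := mem_iUnion.1 ha
      obtain ⟨k, hk⟩ := mem_iUnion.1 ha'
      rcases eq_or_ne i k with rfl | hik
      · exact Set.disjoint_left.1 (h5 i (cl i)) hi hk
      · exact hcross i k a hik (Or.inl hi) (Or.inr hk)
    have hsubW : {x} ∪ ⋃ i, A i ⊆ W := by
      rintro t (ht | ht)
      · rw [mem_singleton_iff] at ht; subst ht; exact hxW
      · obtain ⟨i, hi⟩ := mem_iUnion.1 ht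
        exact hBW i (hA_sub i hi)
    have hctbl_p : Ep₀.Countable := countable_iUnion (fun i => h1 i (cl i))
    have hctbl_m : Em₀.Countable := countable_iUnion (fun i => h2 i (cl i))
    have hGood : GoodPt V Ep₀ Em₀ (j + 1) x := by
      refine ⟨hWV hxW, ?_⟩
      intro W' hW'
      obtain ⟨η, hη, hballW'⟩ := Metric.nhds_basis_ball.mem_iff.1 hW'
      obtain ⟨i₁, hi₁⟩ := dsmall (η / 2) (by positivity)
      set e := 2 * i₁ with he
      have hce : cl e = true := by simp [cl, he, Nat.mul_mod_right]
      have hco : cl (e + 1) = false := by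
        simp only [cl, decide_eq_false_iff_not]
        omega
      have hclose : ∀ i, d i ≤ d i₁ → XC i (cl i) ∈ W' := by
        intro i hi
        apply hballW'
        have h2d := hB2d i _ (hA_sub i (hroot i))
        rw [mem_ball]
        calc dist (XC i (cl i)) x < 2 * d i := h2d
          _ ≤ 2 * d i₁ := by linarith
          _ < η := by linarith
      have hue : XC e (cl e) ∈ EP e (cl e) := by
        have := h6 e (cl e); rw [hce] at this ⊢; exact this
      have hvo : XC (e+1) (cl (e+1)) ∈ EM (e+1) (cl (e+1)) := by
        have := h6 (e+1) (cl (e+1)); rw [hco] at this ⊢; exact this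
      refine ⟨XC e (cl e), XC (e+1) (cl (e+1)),
        mem_iUnion.2 ⟨e, hue⟩, mem_iUnion.2 ⟨e+1, hvo⟩,
        hclose e (dmono i₁ e (by omega)), hclose (e+1) (dmono i₁ (e+1) (by omega)), ?_, ?_⟩
      · exact goodPt_mono' (subset_iUnion (fun i => EP i (cl i)) e)
          (subset_iUnion (fun i => EM i (cl i)) e) (h7 e (cl e))
      · exact goodPt_mono' (subset_iUnion (fun i => EP i (cl i)) (e+1))
          (subset_iUnion (fun i => EM i (cl i)) (e+1)) (h7 (e+1) (cl (e+1)))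
    cases b
    · -- b = false : put root in Em
      refine ⟨Ep₀, insert x Em₀, x, hctbl_p, hctbl_m.insert x, ?_, ?_, ?_, ?_, ?_⟩
      · have heq : Ep₀ ∪ insert x Em₀ = {x} ∪ ⋃ i, A i := by
          rw [union_insert, insert_eq, hEpEm_union]
        rw [heq]; exact hSclosed
      · have heq : Ep₀ ∪ insert x Em₀ = {x} ∪ ⋃ i, A i := by
          rw [union_insert, insert_eq, hEpEm_union]
        rw [heq]; exact hsubW
      · rw [Set.disjoint_left]
        intro a ha ha'
        rcases mem_insert_iff.1 ha' with rfl | ha''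
        · exact hxEp₀ ha
        · exact Set.disjoint_left.1 hdisj0 ha ha''
      · simp
      · exact goodPt_mono' (subset_refl _) (subset_insert _ _) hGood
    · -- b = true : put root in Ep
      refine ⟨insert x Ep₀, Em₀, x, hctbl_p.insert x, hctbl_m, ?_, ?_, ?_, ?_, ?_⟩
      · have heq : insert x Ep₀ ∪ Em₀ = {x} ∪ ⋃ i, A i := by
          rw [insert_union, insert_eq, hEpEm_union]
        rw [heq]; exact hSclosed
      · have heq : insert x Ep₀ ∪ Em₀ = {x} ∪ ⋃ i, A i := by
          rw [insert_union, insert_eq, hEpEm_union]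
        rw [heq]; exact hsubW
      · rw [Set.disjoint_left]
        intro a ha ha'
        rcases mem_insert_iff.1 ha with rfl | ha''
        · exact hxEm₀ ha'
        · exact Set.disjoint_left.1 hdisj0 ha'' ha'
      · simp
      · exact goodPt_mono' (subset_insert _ _) (subset_refl _) hGood

lemma exists_small_osc {X : Type*} [MetricSpace X] [CompleteSpace X] {U : Set X}
    (hU : IsOpen U) (hUne : U.Nonempty) {f₀ : X → ℝ} (hf₀ : BaireOne f₀)
    {c₀ : ℝ} (hc₀ : 0 < c₀) :
    ∃ V : Set X, IsOpen V ∧ V.Nonempty ∧ V ⊆ U ∧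
      ∀ u ∈ V, ∀ v ∈ V, |f₀ u - f₀ v| ≤ c₀ := by
  obtain ⟨fm, hfc, hfl⟩ := hf₀
  set S : ℕ → Set X := fun m =>
    ⋂ (p) (q), ⋂ (_ : m ≤ p), ⋂ (_ : m ≤ q), {t | |fm p t - fm q t| ≤ c₀ / 4} with hS
  have hScl : ∀ m, IsClosed (S m) := by
    intro m
    apply isClosed_iInter; intro p
    apply isClosed_iInter; intro q
    apply isClosed_iInter; intro _
    apply isClosed_iInter; intro _
    exact isClosed_le ((hfc p).sub (hfc q)).abs continuous_const
  have hScov : ⋃ m, S m = univ := by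
    rw [eq_univ_iff_forall]
    intro t
    have hc : CauchySeq (fun n => fm n t) := (hfl t).cauchySeq
    obtain ⟨N, hN⟩ := Metric.cauchySeq_iff.1 hc (c₀ / 4) (by positivity)
    refine mem_iUnion.2 ⟨N, ?_⟩
    simp only [hS, mem_iInter, mem_setOf_eq]
    intro p q hp hq
    have := hN p hp q hq
    rw [Real.dist_eq] at this
    exact this.le
  have hdense : Dense (⋃ m, interior (S m)) :=
    dense_iUnion_interior_of_closed hScl hScov
  obtain ⟨x₁, hx₁U, hx₁⟩ := hdense.inter_open_nonempty U hU hUne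
  obtain ⟨m, hx₁m⟩ := mem_iUnion.1 hx₁
  have hSapprox : ∀ t ∈ S m, |f₀ t - fm m t| ≤ c₀ / 4 := by
    intro t ht
    have htS : ∀ p, m ≤ p → |fm p t - fm m t| ≤ c₀ / 4 := by
      intro p hp
      simp only [hS, mem_iInter, mem_setOf_eq] at ht
      exact ht p m hp (le_refl m)
    have htt : Tendsto (fun p => |fm p t - fm m t|) atTop (𝓝 (|f₀ t - fm m t|)) :=
      ((hfl t).sub tendsto_const_nhds).abs
    exact le_of_tendsto htt (eventually_atTop.2 ⟨m, htS⟩)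
  set O : Set X := {t | |fm m t - fm m x₁| < c₀ / 4} with hO
  have hOopen : IsOpen O := isOpen_lt ((hfc m).sub continuous_const).abs continuous_const
  have hx₁O : x₁ ∈ O := by simp [hO, hc₀]
  refine ⟨interior (S m) ∩ U ∩ O, (isOpen_interior.inter hU).inter hOopen,
    ⟨x₁, ⟨hx₁m, hx₁U⟩, hx₁O⟩, fun t ht => ht.1.2, ?_⟩
  rintro u ⟨⟨huS, _⟩, huO⟩ v ⟨⟨hvS, _⟩, hvO⟩
  have h1 := hSapprox u (interior_subset huS)
  have h2 := hSapprox v (interior_subset hvS)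
  have h3 : |fm m u - fm m x₁| < c₀ / 4 := huO
  have h4 : |fm m v - fm m x₁| < c₀ / 4 := hvO
  have key : f₀ u - f₀ v = (f₀ u - fm m u) + (fm m u - fm m x₁)
      + (fm m x₁ - fm m v) + (fm m v - f₀ v) := by ring
  rw [key]
  have ha := abs_add_le ((f₀ u - fm m u) + (fm m u - fm m x₁) + (fm m x₁ - fm m v)) (fm m v - f₀ v)
  have hb := abs_add_le ((f₀ u - fm m u) + (fm m u - fm m x₁)) (fm m x₁ - fm m v)
  have hcc := abs_add_le (f₀ u - fm m u) (fm m u - fm m x₁)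
  have h5 : |fm m x₁ - fm m v| < c₀ / 4 := by rw [abs_sub_comm]; exact h4
  have h6 : |fm m v - f₀ v| ≤ c₀ / 4 := by rw [abs_sub_comm]; exact h2
  linarith

end DBSCHelpers

theorem differences_semicontinuous_stmt_12
    {K : Type*} [TopologicalSpace K] [PolishSpace K] [PerfectSpace K]
    (U : Set K) (hU : IsOpen U) (hUne : U.Nonempty) (lam : ℝ) :
    IsMeagre {f : {g : lp (fun _ : K => ℝ) ∞ // BaireOne fun k => g k} |
      ∃ φ : ℕ → K → ℝ, (∀ n, Continuous (φ n)) ∧ (∀ n, ∃ C : ℝ, ∀ k, |φ n k| ≤ C) ∧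
        (∀ k, HasSum (fun n => φ n k) ((f : lp (fun _ : K => ℝ) ∞) k)) ∧
        ∀ t ∈ U, ∑' n, |φ n t| ≤ lam} := by
  classical
  letI := TopologicalSpace.upgradeIsCompletelyMetrizable K
  haveI : Nonempty K := ⟨hUne.some⟩
  set S := {f : {g : lp (fun _ : K => ℝ) ∞ // BaireOne fun k => g k} |
      ∃ φ : ℕ → K → ℝ, (∀ n, Continuous (φ n)) ∧ (∀ n, ∃ C : ℝ, ∀ k, |φ n k| ≤ C) ∧
        (∀ k, HasSum (fun n => φ n k) ((f : lp (fun _ : K => ℝ) ∞) k)) ∧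
        ∀ t ∈ U, ∑' n, |φ n t| ≤ lam} with hSdef
  have hperf : ∀ (x : K) (η : ℝ), 0 < η → ∃ y : K, y ≠ x ∧ dist y x < η := by
    intro x η hη
    have h := preperfect_iff_nhds.1 (PerfectSpace.univ_preperfect (α := K))
    obtain ⟨y, hy1, hy2⟩ := h x (mem_univ x) (Metric.ball x η) (Metric.ball_mem_nhds x hη)
    exact ⟨y, hy2, by have := hy1.1; rwa [mem_ball] at this⟩
  have hmain : interior (closure S) = ∅ := by
    rw [eq_empty_iff_forall_notMem]
    intro f₀ hf₀mem
    have hclnhds : closure S ∈ 𝓝 f₀ := mem_interior_iff_mem_nhds.1 hf₀mem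
    obtain ⟨r, hr, hballsub⟩ := Metric.mem_nhds_iff.1 hclnhds
    have hf₀B : BaireOne (fun k => (f₀ : lp (fun _ : K => ℝ) ∞) k) := f₀.2
    obtain ⟨V, hVopen, hVne, hVU, hVosc⟩ :=
      exists_small_osc hU hUne hf₀B (show (0:ℝ) < r / 8 by linarith)
    obtain ⟨a, haV⟩ := hVne
    obtain ⟨bpt, hbne, -⟩ := hperf a (1 : ℝ) one_pos
    have hdba : 0 < dist bpt a := dist_pos.2 hbne
    set W0 : Set K := V ∩ Metric.ball a (dist bpt a) with hW0
    have hW0open : IsOpen W0 := hVopen.inter Metric.isOpen_ball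
    have hW0ne : W0.Nonempty := ⟨a, haV, Metric.mem_ball_self hdba⟩
    have hW0V : W0 ⊆ V := inter_subset_left
    have hbW0 : bpt ∉ W0 := by
      rintro ⟨-, hb⟩
      rw [mem_ball] at hb
      exact lt_irrefl _ hb
    set N : ℕ := ⌊lam / (r / 16)⌋₊ + 1 with hN
    obtain ⟨Ep, Em, xr, hEpc, hEmc, hEcl, hEsub, hEdisj, hroot, hGood⟩ :=
      tree_exists hperf N W0 hW0open hW0ne hW0V true
    simp only [Bool.cond_true] at hroot
    have hbE : bpt ∉ Ep ∪ Em := fun h => hbW0 (hEsub h)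
    set hfun : K → ℝ := fun t => if t ∈ Ep then r / 2 else 0 with hhfun
    have hhB : BaireOne hfun :=
      baireOne_indicator (r / 2) subset_union_left hEcl (hEpc.union hEmc) ⟨xr, hroot⟩ hbE
    have hhbd : ∀ t, ‖hfun t‖ ≤ r / 2 := by
      intro t
      simp only [hhfun, Real.norm_eq_abs]
      split
      · rw [abs_of_nonneg (by linarith)]
      · rw [abs_zero]; linarith
    have hmem : Memℓp hfun ∞ := memℓp_infty ⟨r / 2, by rintro w ⟨t, rfl⟩; exact hhbd t⟩
    set H : lp (fun _ : K => ℝ) ∞ := ⟨hfun, hmem⟩ with hH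
    set g0 : lp (fun _ : K => ℝ) ∞ := (f₀ : lp (fun _ : K => ℝ) ∞) + H with hg0
    have hg0app : ∀ t, g0 t = (f₀ : lp (fun _ : K => ℝ) ∞) t + hfun t := by
      intro t
      rw [hg0, lp.coeFn_add]
      rfl
    have hg0B : BaireOne (fun k => g0 k) := by
      have heq : (fun k => g0 k) = fun k => (f₀ : lp (fun _ : K => ℝ) ∞) k + hfun k := by
        funext k; exact hg0app k
      rw [heq]
      exact BaireOne.add' hf₀B hhB
    set g : {g : lp (fun _ : K => ℝ) ∞ // BaireOne fun k => g k} := ⟨g0, hg0B⟩ with hg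
    have hHnorm : ‖H‖ ≤ r / 2 := lp.norm_le_of_forall_le' (r / 2) (fun i => hhbd i)
    have hgball : g ∈ Metric.ball f₀ r := by
      rw [mem_ball, Subtype.dist_eq]
      have heq : dist (g : lp (fun _ : K => ℝ) ∞) (f₀ : lp (fun _ : K => ℝ) ∞) = ‖H‖ := by
        show dist g0 (f₀ : lp (fun _ : K => ℝ) ∞) = ‖H‖
        rw [dist_eq_norm, hg0, add_sub_cancel_left]
      rw [heq]
      linarith
    have hgcl : g ∈ closure S := hballsub hgball
    obtain ⟨f, hfS, hdist⟩ := Metric.mem_closure_iff.1 hgcl (r / 16) (by linarith)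
    obtain ⟨φ, hφc, -, hφsum, hφlam⟩ := hfS
    have hptwise : ∀ t : K, |(f : lp (fun _ : K => ℝ) ∞) t - g0 t| < r / 16 := by
      intro t
      have h1 : ‖((f : lp (fun _ : K => ℝ) ∞) - g0) t‖ ≤ ‖(f : lp (fun _ : K => ℝ) ∞) - g0‖ :=
        lp.norm_apply_le_norm (by norm_num : (∞ : ℝ≥0∞) ≠ 0) _ t
      have h2 : ‖(f : lp (fun _ : K => ℝ) ∞) - g0‖
          = dist (f : lp (fun _ : K => ℝ) ∞) (g0 : lp (fun _ : K => ℝ) ∞) :=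
        (dist_eq_norm _ _).symm
      have h3 : dist (f : lp (fun _ : K => ℝ) ∞) (g0 : lp (fun _ : K => ℝ) ∞) < r / 16 := by
        rw [dist_comm]
        rw [Subtype.dist_eq] at hdist
        exact hdist
      have h4 : ((f : lp (fun _ : K => ℝ) ∞) - g0) t
          = (f : lp (fun _ : K => ℝ) ∞) t - g0 t := by
        rw [lp.coeFn_sub]; rfl
      rw [← h4]
      calc |((f : lp (fun _ : K => ℝ) ∞) - g0) t|
          = ‖((f : lp (fun _ : K => ℝ) ∞) - g0) t‖ := rfl
        _ ≤ ‖(f : lp (fun _ : K => ℝ) ∞) - g0‖ := h1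
        _ = dist (f : lp (fun _ : K => ℝ) ∞) (g0 : lp (fun _ : K => ℝ) ∞) := h2
        _ < r / 16 := h3
    have hgap : ∀ u ∈ Ep, ∀ v ∈ Em,
        r / 4 ≤ |(fun t => (f : lp (fun _ : K => ℝ) ∞) t) u
          - (fun t => (f : lp (fun _ : K => ℝ) ∞) t) v| := by
      intro u hu v hv
      have huV : u ∈ V := hW0V (hEsub (Or.inl hu))
      have hvV : v ∈ V := hW0V (hEsub (Or.inr hv))
      have hgu : g0 u = (f₀ : lp (fun _ : K => ℝ) ∞) u + r / 2 := by
        rw [hg0app u, hhfun]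
        simp only [if_pos hu]
      have hgv : g0 v = (f₀ : lp (fun _ : K => ℝ) ∞) v := by
        rw [hg0app v, hhfun]
        have hnv : v ∉ Ep := Set.disjoint_right.1 hEdisj hv
        simp only [if_neg hnv, add_zero]
      have hosc : |(f₀ : lp (fun _ : K => ℝ) ∞) u - (f₀ : lp (fun _ : K => ℝ) ∞) v| ≤ r / 8 :=
        hVosc u huV v hvV
      have ha := abs_lt.1 (hptwise u)
      have hb := abs_lt.1 (hptwise v)
      have hc := abs_le.1 hosc
      have hX : (f : lp (fun _ : K => ℝ) ∞) u - (f : lp (fun _ : K => ℝ) ∞) v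
          = r / 2 + ((f₀ : lp (fun _ : K => ℝ) ∞) u - (f₀ : lp (fun _ : K => ℝ) ∞) v)
            + ((f : lp (fun _ : K => ℝ) ∞) u - g0 u)
            - ((f : lp (fun _ : K => ℝ) ∞) v - g0 v) := by
        rw [hgu, hgv]; ring
      have hge : r / 4 ≤ (f : lp (fun _ : K => ℝ) ∞) u - (f : lp (fun _ : K => ℝ) ∞) v := by
        rw [hX]
        linarith [ha.1, hb.2, hc.1]
      exact le_trans hge (le_abs_self _)
    have hδpos : (0:ℝ) < r / 32 := by linarith
    obtain ⟨w, hwV, -, m₁, -, hineq⟩ :=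
      variation_lemma hφc hφsum hδpos hgap N xr hGood 0 univ univ_mem
    have hNc : (N : ℝ) * (r / 16) ≤ ∑ n ∈ Finset.Ico 0 m₁, |φ n w| := by
      have heq : (r / 4) / 2 - 2 * (r / 32) = r / 16 := by ring
      rw [← heq]
      exact hineq
    have hsummable : Summable (fun n => |φ n w|) := (hφsum w).summable.abs
    have hle : ∑ n ∈ Finset.Ico 0 m₁, |φ n w| ≤ ∑' n, |φ n w| := by
      rw [← Finset.range_eq_Ico]
      exact Summable.sum_le_tsum _ (fun i _ => abs_nonneg _) hsummable
    have hwU : w ∈ U := hVU hwV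
    have hlam := hφlam w hwU
    have hNlam : lam < (N : ℝ) * (r / 16) := by
      have hrpos : (0:ℝ) < r / 16 := by linarith
      have h1 : lam / (r / 16) < (N : ℝ) := by
        rw [hN]; push_cast; exact Nat.lt_floor_add_one _
      calc lam = lam / (r / 16) * (r / 16) := by field_simp
        _ < (N : ℝ) * (r / 16) := mul_lt_mul_of_pos_right h1 hrpos
    linarith
  have hnwd : IsNowhereDense (closure S) := (isClosed_closure).isNowhereDense_iff.2 hmain
  rw [isMeagre_iff_countable_union_isNowhereDense]
  refine ⟨{closure S}, ?_, countable_singleton _, ?_⟩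
  · intro t ht
    rw [mem_singleton_iff] at ht
    rw [ht]
    exact hnwd
  · rw [sUnion_singleton]
    exact subset_closure
end

section
/- Let K be a Polish space and f : K → ℝ. Suppose K = ⋃_{j=1}^∞ A^j where each A^j is ambiguous (both Fσ and Gδ) and f restricted to each A^j belongs to DSC(A^j). Then f ∈ DSC(K). -/
open Filter Topology Set

section Helpers

variable {X : Type*} [TopologicalSpace X]

lemma lsc_of_mono_limit {G : X → ℝ} {g : ℕ → X → ℝ}
    (hc : ∀ n, Continuous (g n)) (hle : ∀ n z, g n z ≤ G z)
    (hsup : ∀ x, ∀ y < G x, ∃ n, y < g n x) :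
    LowerSemicontinuous G := by
  intro x y hy
  obtain ⟨n, hn⟩ := hsup x y hy
  have hopen : IsOpen {z | y < g n z} := isOpen_lt continuous_const (hc n)
  filter_upwards [hopen.mem_nhds hn] with z hz
  exact lt_of_lt_of_le hz (hle n z)

lemma dsc_to_diff {g : X → ℝ} (h : DSC g) :
    ∃ U V : X → ℝ, (∀ x, 0 ≤ U x) ∧ (∀ x, 0 ≤ V x) ∧
      LowerSemicontinuous U ∧ LowerSemicontinuous V ∧ ∀ x, g x = U x - V x := by
  obtain ⟨h', hc, hlim, hsum⟩ := h
  set a : ℕ → X → ℝ := fun n x => h' (n + 1) x - h' n x with ha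
  have hsp : ∀ x, Summable fun n => max (a n x) 0 := fun x =>
    Summable.of_nonneg_of_le (fun n => le_max_right _ _)
      (fun n => max_le (le_abs_self _) (abs_nonneg _)) (hsum x)
  have hsn : ∀ x, Summable fun n => max (-a n x) 0 := fun x =>
    Summable.of_nonneg_of_le (fun n => le_max_right _ _)
      (fun n => max_le (neg_le_abs _) (abs_nonneg _)) (hsum x)
  set U : X → ℝ := fun x => max (h' 0 x) 0 + ∑' n, max (a n x) 0 with hU
  set V : X → ℝ := fun x => max (-h' 0 x) 0 + ∑' n, max (-a n x) 0 with hV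
  have hca : ∀ n, Continuous (fun x => a n x) := fun n => (hc (n + 1)).sub (hc n)
  have lscU : LowerSemicontinuous U := by
    apply lsc_of_mono_limit (g := fun N x => max (h' 0 x) 0 + ∑ n ∈ Finset.range N, max (a n x) 0)
    · exact fun N => ((hc 0).max continuous_const).add
        (continuous_finset_sum _ fun n _ => (hca n).max continuous_const)
    · intro N z
      exact add_le_add_right ((hsp z).sum_le_tsum _ (fun i _ => le_max_right _ _)) _
    · intro x y hy
      have ht : Tendsto (fun N => max (h' 0 x) 0 + ∑ n ∈ Finset.range N, max (a n x) 0)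
          atTop (𝓝 (U x)) := ((hsp x).hasSum.tendsto_sum_nat).const_add _
      exact (ht.eventually (eventually_gt_nhds hy)).exists
  have lscV : LowerSemicontinuous V := by
    apply lsc_of_mono_limit (g := fun N x => max (-h' 0 x) 0 + ∑ n ∈ Finset.range N, max (-a n x) 0)
    · exact fun N => ((hc 0).neg.max continuous_const).add
        (continuous_finset_sum _ fun n _ => (hca n).neg.max continuous_const)
    · intro N z
      exact add_le_add_right ((hsn z).sum_le_tsum _ (fun i _ => le_max_right _ _)) _
    · intro x y hy
      have ht : Tendsto (fun N => max (-h' 0 x) 0 + ∑ n ∈ Finset.range N, max (-a n x) 0)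
          atTop (𝓝 (V x)) := ((hsn x).hasSum.tendsto_sum_nat).const_add _
      exact (ht.eventually (eventually_gt_nhds hy)).exists
  refine ⟨U, V, ?_, ?_, lscU, lscV, ?_⟩
  · exact fun x => add_nonneg (le_max_right _ _) (tsum_nonneg fun n => le_max_right _ _)
  · exact fun x => add_nonneg (le_max_right _ _) (tsum_nonneg fun n => le_max_right _ _)
  · intro x
    have hsa : Summable fun n => a n x := (hsum x).of_abs
    have htel : ∑' n, a n x = g x - h' 0 x := by
      have h1 : Tendsto (fun N => ∑ n ∈ Finset.range N, a n x) atTop (𝓝 (∑' n, a n x)) :=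
        hsa.hasSum.tendsto_sum_nat
      have h2 : (fun N => ∑ n ∈ Finset.range N, a n x) = fun N => h' N x - h' 0 x := by
        funext N; exact Finset.sum_range_sub (fun n => h' n x) N
      rw [h2] at h1
      exact tendsto_nhds_unique h1 ((hlim x).sub_const _)
    have hd : ∑' n, max (a n x) 0 - ∑' n, max (-a n x) 0 = ∑' n, a n x := by
      rw [← Summable.tsum_sub (hsp x) (hsn x)]
      congr 1; funext n; exact max_zero_sub_max_neg_zero_eq_self _
    have : U x - V x = h' 0 x + ∑' n, a n x := by
      simp only [hU, hV]
      have := max_zero_sub_max_neg_zero_eq_self (h' 0 x)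
      linarith [hd, this]
    rw [this, htel]; ring

end Helpers

section Moreau

variable {X : Type*} [MetricSpace X]

lemma moreau [Nonempty X] {U : X → ℝ} (h0 : ∀ x, 0 ≤ U x) (hU : LowerSemicontinuous U) :
    ∃ u : ℕ → X → ℝ, (∀ n, Continuous (u n)) ∧ (∀ n x, u n x ≤ u (n + 1) x) ∧
      (∀ n x, 0 ≤ u n x) ∧ (∀ n x, u n x ≤ U x) ∧
      (∀ x, Tendsto (fun n => u n x) atTop (𝓝 (U x))) := by
  set u : ℕ → X → ℝ := fun n x => ⨅ y, (U y + n * dist x y) with hu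
  have hbdd : ∀ (n : ℕ) (x : X), BddBelow (range fun y => U y + (n : ℝ) * dist x y) := by
    intro n x
    refine ⟨0, ?_⟩
    rintro _ ⟨y, rfl⟩
    exact add_nonneg (h0 y) (mul_nonneg (by positivity) dist_nonneg)
  have hnonneg : ∀ n x, 0 ≤ u n x := fun n x =>
    le_ciInf fun y => add_nonneg (h0 y) (mul_nonneg (by positivity) dist_nonneg)
  have hleU : ∀ n x, u n x ≤ U x := by
    intro n x
    have := ciInf_le (hbdd n x) x
    simpa using this
  have hmono : ∀ n x, u n x ≤ u (n + 1) x := by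
    intro n x
    refine le_ciInf fun y => ?_
    refine le_trans (ciInf_le (hbdd n x) y) ?_
    have : (n : ℝ) * dist x y ≤ ((n : ℝ) + 1) * dist x y :=
      mul_le_mul_of_nonneg_right (by linarith) dist_nonneg
    push_cast
    linarith
  have hlip : ∀ n x x', u n x ≤ u n x' + n * dist x x' := by
    intro n x x'
    rw [← sub_le_iff_le_add]
    refine le_ciInf fun y => ?_
    rw [sub_le_iff_le_add]
    refine le_trans (ciInf_le (hbdd n x) y) ?_
    have htri : dist x y ≤ dist x x' + dist x' y := dist_triangle _ _ _
    have : (n : ℝ) * dist x y ≤ n * dist x' y + n * dist x x' := by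
      nlinarith [Nat.cast_nonneg (α := ℝ) n]
    linarith
  have hcont : ∀ n, Continuous (u n) := by
    intro n
    refine (LipschitzWith.of_dist_le_mul (K := (n : NNReal)) (f := u n) ?_).continuous
    intro x x'
    have h1 := hlip n x x'
    have h2 := hlip n x' x
    rw [dist_comm x' x] at h2
    rw [Real.dist_eq, abs_sub_le_iff]
    push_cast
    constructor <;> linarith
  refine ⟨u, hcont, hmono, hnonneg, hleU, ?_⟩
  intro x
  rw [tendsto_order]
  constructor
  · intro b hb
    set b' := (b + U x) / 2 with hb'
    have hbb' : b < b' := by simp only [hb']; linarith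
    have hb'U : b' < U x := by simp only [hb']; linarith
    have hev : ∀ᶠ z in 𝓝 x, b' < U z := hU x b' hb'U
    obtain ⟨δ, hδpos, hball⟩ := Metric.eventually_nhds_iff_ball.mp hev
    obtain ⟨N, hN⟩ := exists_nat_ge (U x / δ)
    rw [eventually_atTop]
    refine ⟨N + 1, fun n hn => ?_⟩
    have hnδ : U x ≤ (n : ℝ) * δ := by
      have h1 : U x / δ ≤ (N : ℝ) := hN
      have h2 : (N : ℝ) < n := by exact_mod_cast hn
      have := (div_le_iff₀ hδpos).mp h1
      nlinarith
    have hkey : b' ≤ u n x := by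
      refine le_ciInf fun y => ?_
      by_cases hy : y ∈ Metric.ball x δ
      · have h3 : b' < U y := hball y hy
        have h4 : (0:ℝ) ≤ (n : ℝ) * dist x y := mul_nonneg (by positivity) dist_nonneg
        linarith
      · have hdist : δ ≤ dist y x := by
          simpa [Metric.mem_ball, not_lt] using hy
        have h5 : (n : ℝ) * δ ≤ (n : ℝ) * dist x y := by
          rw [dist_comm]
          exact mul_le_mul_of_nonneg_left hdist (by positivity)
        have := h0 y
        linarith
    exact lt_of_lt_of_le hbb' hkey
  · intro b hb
    filter_upwards [] with n
    exact lt_of_le_of_lt (hleU n x) hb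

end Moreau

lemma diff_to_dsc {X : Type*} [MetricSpace X] {g U V : X → ℝ}
    (hU0 : ∀ x, 0 ≤ U x) (hV0 : ∀ x, 0 ≤ V x)
    (hU : LowerSemicontinuous U) (hV : LowerSemicontinuous V)
    (hg : ∀ x, g x = U x - V x) : DSC g := by
  rcases isEmpty_or_nonempty X with hX | hX
  · exact ⟨fun _ _ => 0, fun n => continuous_const, fun x => (IsEmpty.false x).elim,
      fun x => (IsEmpty.false x).elim⟩
  obtain ⟨u, huc, hum, hun, huU, hut⟩ := moreau hU0 hU
  obtain ⟨v, hvc, hvm, hvn, hvV, hvt⟩ := moreau hV0 hV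
  refine ⟨fun n x => u n x - v n x, fun n => (huc n).sub (hvc n), ?_, ?_⟩
  · intro x
    have := (hut x).sub (hvt x)
    rw [← hg x] at this
    exact this
  · intro x
    apply summable_of_sum_range_le (c := U x + V x)
    · intro n
      exact abs_nonneg _
    · intro N
      have hterm : ∀ n, |u (n + 1) x - v (n + 1) x - (u n x - v n x)| ≤
          (u (n + 1) x - u n x) + (v (n + 1) x - v n x) := by
        intro n
        have h1 := hum n x
        have h2 := hvm n x
        rw [abs_le]
        constructor <;> linarith
      calc ∑ n ∈ Finset.range N, |u (n + 1) x - v (n + 1) x - (u n x - v n x)|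
          ≤ ∑ n ∈ Finset.range N, ((u (n + 1) x - u n x) + (v (n + 1) x - v n x)) :=
            Finset.sum_le_sum fun n _ => hterm n
        _ = (u N x - u 0 x) + (v N x - v 0 x) := by
            rw [Finset.sum_add_distrib, Finset.sum_range_sub (fun n => u n x) N,
              Finset.sum_range_sub (fun n => v n x) N]
        _ ≤ U x + V x := by
            linarith [huU N x, hvV N x, hun 0 x, hvn 0 x]

lemma glue_lsc {K : Type*} [TopologicalSpace K] (B : ℕ → Set K) (D : ℕ → ℕ → Set K)
    (hDcl : ∀ j n, IsClosed (D j n)) (hDB : ∀ j n, D j n ⊆ B j)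
    (hDmono : ∀ j m n, m ≤ n → D j m ⊆ D j n)
    (J N : K → ℕ)
    (hJu : ∀ x j, x ∈ B j → j = J x)
    (hNE : ∀ x, x ∈ D (J x) (N x)) (hNle : ∀ x, J x ≤ N x)
    (hNmin : ∀ x j m, m < N x → j ≤ m → x ∉ D j m)
    (p q : ℕ → K → ℝ)
    (hp0 : ∀ j x, 0 ≤ p j x) (hq0 : ∀ j x, 0 ≤ q j x)
    (hplsc : ∀ j, ∀ x ∈ B j, ∀ y, y < p j x → ∃ t ∈ 𝓝 x, ∀ z ∈ t, z ∈ B j → y < p j z)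
    (hbound : ∀ j n x, x ∈ D j n → p j x + q j x ≤ n) :
    LowerSemicontinuous (fun x => p (J x) x + ((N x : ℝ)) ^ 2) := by
  intro x y hy
  set n := N x with hn
  set j := J x with hj
  have hxD : x ∈ D j n := hNE x
  have hxB : x ∈ B j := hDB j n hxD
  have hpx_le : p j x ≤ (n : ℝ) := by
    have := hbound j n x hxD
    have := hq0 j x
    linarith
  -- first closed set to avoid
  set F1 : Set K := ⋃ i ∈ Finset.range n, D i (n - 1) with hF1
  have hF1cl : IsClosed F1 := by
    apply Set.Finite.isClosed_biUnion (Finset.finite_toSet _)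
    exact fun i _ => hDcl i (n - 1)
  have hxF1 : x ∉ F1 := by
    intro hx
    simp only [hF1, Set.mem_iUnion, Finset.mem_coe, Finset.mem_range, exists_prop] at hx
    obtain ⟨i, hi, hxi⟩ := hx
    have hnpos : 0 < n := Nat.zero_lt_of_lt hi
    exact hNmin x i (n - 1) (Nat.sub_lt hnpos one_pos) (Nat.le_sub_one_of_lt hi) hxi
  have hF1prop : ∀ z, z ∉ F1 → n ≤ N z := by
    intro z hz
    by_contra hlt
    push_neg at hlt
    have h1 : N z ≤ n - 1 := Nat.le_sub_one_of_lt hlt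
    have h2 : z ∈ D (J z) (n - 1) := hDmono _ _ _ h1 (hNE z)
    apply hz
    simp only [hF1, Set.mem_iUnion, Finset.mem_coe, Finset.mem_range, exists_prop]
    exact ⟨J z, lt_of_le_of_lt (hNle z) hlt, h2⟩
  -- second closed set to avoid
  set F2 : Set K := ⋃ i ∈ (Finset.range (n + 1)).erase j, D i n with hF2
  have hF2cl : IsClosed F2 := by
    apply Set.Finite.isClosed_biUnion (Finset.finite_toSet _)
    exact fun i _ => hDcl i n
  have hxF2 : x ∉ F2 := by
    intro hx
    simp only [hF2, Set.mem_iUnion, Finset.mem_coe, Finset.mem_erase, exists_prop] at hx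
    obtain ⟨i, ⟨hij, _⟩, hxi⟩ := hx
    exact hij (hJu x i (hDB i n hxi))
  have hF2prop : ∀ z, z ∉ F2 → N z = n → J z = j := by
    intro z hz hNz
    by_contra hne
    apply hz
    simp only [hF2, Set.mem_iUnion, Finset.mem_coe, Finset.mem_erase, exists_prop]
    refine ⟨J z, ⟨hne, ?_⟩, by rw [← hNz]; exact hNE z⟩
    rw [Finset.mem_range]
    have := hNle z
    omega
  -- third neighborhood from lsc of p j on B j
  have hy' : y - (n : ℝ) ^ 2 < p j x := by
    simp only [] at hy
    linarith [hy]
  obtain ⟨t3, ht3n, ht3⟩ := hplsc j x hxB _ hy'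
  -- combine
  have hmemnhds : F1ᶜ ∩ F2ᶜ ∩ t3 ∈ 𝓝 x :=
    Filter.inter_mem (Filter.inter_mem (hF1cl.isOpen_compl.mem_nhds hxF1)
      (hF2cl.isOpen_compl.mem_nhds hxF2)) ht3n
  filter_upwards [hmemnhds] with z hz
  obtain ⟨⟨hz1, hz2⟩, hz3⟩ := hz
  have hnNz : n ≤ N z := hF1prop z hz1
  rcases eq_or_lt_of_le hnNz with heq | hlt
  · -- N z = n
    have hJz : J z = j := hF2prop z hz2 heq.symm
    have hzB : z ∈ B j := by
      have := hNE z
      rw [hJz, ← heq] at this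
      exact hDB j n this
    have := ht3 z hz3 hzB
    simp only [hJz, ← heq]
    linarith
  · -- n < N z
    have hcast : ((n : ℝ) + 1) ≤ (N z : ℝ) := by exact_mod_cast hlt
    have hsq : ((n : ℝ) + 1) ^ 2 ≤ ((N z : ℝ)) ^ 2 := by nlinarith [Nat.cast_nonneg (α := ℝ) n]
    have hp0' := hp0 (J z) z
    have : y < p j x + (n : ℝ) ^ 2 := hy
    nlinarith

theorem differences_semicontinuous_stmt_13
    {K : Type*} [TopologicalSpace K] [PolishSpace K] (f : K → ℝ) (A : ℕ → Set K)
    (hA : ∀ j, IsAmbiguous (A j)) (hcov : (⋃ j, A j) = Set.univ)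
    (hDSC : ∀ j, DSC ((A j).restrict f)) :
    DSC f := by

  classical
  choose F hFcl hFeq using fun j => (hA j).1
  choose G hGop hGeq using fun j => (hA j).2.eq_iInter_nat
  -- disjointified pieces
  set B : ℕ → Set K := fun j => A j \ ⋃ i ∈ Finset.range j, A i with hB
  have hBA : ∀ j, B j ⊆ A j := fun j => diff_subset
  have hex0 : ∀ x : K, ∃ j, x ∈ A j := by
    intro x
    have hx : x ∈ ⋃ j, A j := by rw [hcov]; trivial
    simpa [mem_iUnion] using hx
  set J : K → ℕ := fun x => Nat.find (hex0 x) with hJ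
  have hJB : ∀ x, x ∈ B (J x) := by
    intro x
    refine ⟨Nat.find_spec (hex0 x), ?_⟩
    simp only [mem_iUnion, Finset.mem_range, exists_prop, not_exists, not_and]
    intro i hi
    exact Nat.find_min (hex0 x) hi
  have hJu : ∀ x j, x ∈ B j → j = J x := by
    intro x j hj
    have h1 : J x ≤ j := Nat.find_min' (hex0 x) hj.1
    rcases eq_or_lt_of_le h1 with h | h
    · exact h.symm
    · exfalso
      apply hj.2
      simp only [mem_iUnion, Finset.mem_range, exists_prop]
      exact ⟨J x, h, Nat.find_spec (hex0 x)⟩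
  -- monotone closed approximations of the pieces
  set Fm : ℕ → ℕ → Set K := fun j n => ⋃ i ∈ Finset.range (n + 1), F j i with hFm
  set Gc : ℕ → ℕ → Set K := fun i n => ⋃ k ∈ Finset.range (n + 1), (G i k)ᶜ with hGc
  set Cm : ℕ → ℕ → Set K := fun j n => Fm j n ∩ ⋂ i ∈ Finset.range j, Gc i n with hCm
  have hCmcl : ∀ j n, IsClosed (Cm j n) := by
    intro j n
    apply IsClosed.inter
    · exact Set.Finite.isClosed_biUnion (Finset.finite_toSet _) fun i _ => hFcl j i
    · exact isClosed_biInter fun i _ =>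
        Set.Finite.isClosed_biUnion (Finset.finite_toSet _) fun k _ => (hGop i k).isClosed_compl
  have hrangesub : ∀ m n : ℕ, m ≤ n →
      ((Finset.range (m + 1) : Finset ℕ) : Set ℕ) ⊆ ((Finset.range (n + 1) : Finset ℕ) : Set ℕ) := by
    intro m n hmn
    exact_mod_cast Finset.range_subset_range.2 (by omega)
  have hCmmono : ∀ j m n, m ≤ n → Cm j m ⊆ Cm j n := by
    intro j m n hmn
    apply inter_subset_inter
    · exact biUnion_subset_biUnion_left (hrangesub m n hmn)
    · exact iInter₂_mono fun i _ => biUnion_subset_biUnion_left (hrangesub m n hmn)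
  have hCmB : ∀ j n, Cm j n ⊆ B j := by
    intro j n x hx
    obtain ⟨hxF, hxG⟩ := hx
    constructor
    · rw [hFeq j]
      simp only [hFm, mem_iUnion, Finset.mem_range, exists_prop] at hxF
      obtain ⟨i, _, hxi⟩ := hxF
      exact mem_iUnion.2 ⟨i, hxi⟩
    · simp only [mem_iUnion, Finset.mem_range, exists_prop, not_exists, not_and]
      intro i hi hxAi
      have hxGc : x ∈ Gc i n := by
        simp only [mem_iInter, Finset.mem_range] at hxG
        exact hxG i hi
      simp only [hGc, mem_iUnion, Finset.mem_range, exists_prop, mem_compl_iff] at hxGc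
      obtain ⟨k, _, hk⟩ := hxGc
      apply hk
      rw [hGeq i] at hxAi
      exact mem_iInter.1 hxAi k
  have hCmcov : ∀ j, ∀ x ∈ B j, ∃ n, x ∈ Cm j n := by
    intro j x hx
    obtain ⟨hxA, hxn⟩ := hx
    rw [hFeq j] at hxA
    obtain ⟨i0, hi0⟩ := mem_iUnion.1 hxA
    have hGek : ∀ i, ∃ k, i < j → x ∈ (G i k)ᶜ := by
      intro i
      by_cases hij : i < j
      · have hxAi : x ∉ A i := by
          intro hxAi
          apply hxn
          simp only [mem_iUnion, Finset.mem_range, exists_prop]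
          exact ⟨i, hij, hxAi⟩
        rw [hGeq i] at hxAi
        simp only [mem_iInter, not_forall] at hxAi
        obtain ⟨k, hk⟩ := hxAi
        exact ⟨k, fun _ => hk⟩
      · exact ⟨0, fun h => absurd h hij⟩
    choose kk hkk using hGek
    refine ⟨max i0 ((Finset.range j).sup kk), ?_, ?_⟩
    · simp only [hFm, mem_iUnion, Finset.mem_range, exists_prop]
      exact ⟨i0, by omega, hi0⟩
    · refine mem_iInter₂.2 fun i hi => ?_
      simp only [Finset.mem_range] at hi
      simp only [hGc, mem_iUnion, Finset.mem_range, exists_prop]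
      refine ⟨kk i, ?_, hkk i hi⟩
      have := Finset.le_sup (f := kk) (Finset.mem_range.2 hi)
      omega
  -- per-piece semicontinuous witnesses
  choose Uj Vj hU0 hV0 hUl hVl hUVeq using fun j => dsc_to_diff (hDSC j)
  set p : ℕ → K → ℝ := fun j x => if h : x ∈ A j then Uj j ⟨x, h⟩ else 0 with hp
  set q : ℕ → K → ℝ := fun j x => if h : x ∈ A j then Vj j ⟨x, h⟩ else 0 with hq
  have hp0 : ∀ j x, 0 ≤ p j x := by
    intro j x
    simp only [hp]
    split
    · exact hU0 j _
    · exact le_refl 0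
  have hq0 : ∀ j x, 0 ≤ q j x := by
    intro j x
    simp only [hq]
    split
    · exact hV0 j _
    · exact le_refl 0
  have hfeq : ∀ j, ∀ x ∈ B j, f x = p j x - q j x := by
    intro j x hx
    have hxA : x ∈ A j := hBA j hx
    simp only [hp, hq]
    rw [dif_pos hxA, dif_pos hxA]
    exact hUVeq j ⟨x, hxA⟩
  have hplsc : ∀ j, ∀ x ∈ B j, ∀ y, y < p j x → ∃ t ∈ 𝓝 x, ∀ z ∈ t, z ∈ B j → y < p j z := by
    intro j x hx y hy
    have hxA : x ∈ A j := hBA j hx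
    have hy' : y < Uj j ⟨x, hxA⟩ := by
      simp only [hp] at hy
      rwa [dif_pos hxA] at hy
    have hev := hUl j ⟨x, hxA⟩ y hy'
    rw [nhds_subtype_eq_comap] at hev
    obtain ⟨t, htn, hts⟩ := Filter.mem_comap.1 hev
    refine ⟨t, htn, fun z hz hzB => ?_⟩
    have hzA : z ∈ A j := hBA j hzB
    have hlt : y < Uj j ⟨z, hzA⟩ := hts hz
    simp only [hp]
    rwa [dif_pos hzA]
  have hqlsc : ∀ j, ∀ x ∈ B j, ∀ y, y < q j x → ∃ t ∈ 𝓝 x, ∀ z ∈ t, z ∈ B j → y < q j z := by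
    intro j x hx y hy
    have hxA : x ∈ A j := hBA j hx
    have hy' : y < Vj j ⟨x, hxA⟩ := by
      simp only [hq] at hy
      rwa [dif_pos hxA] at hy
    have hev := hVl j ⟨x, hxA⟩ y hy'
    rw [nhds_subtype_eq_comap] at hev
    obtain ⟨t, htn, hts⟩ := Filter.mem_comap.1 hev
    refine ⟨t, htn, fun z hz hzB => ?_⟩
    have hzA : z ∈ A j := hBA j hzB
    have hlt : y < Vj j ⟨z, hzA⟩ := hts hz
    simp only [hq]
    rwa [dif_pos hzA]
  -- the level sets
  set D : ℕ → ℕ → Set K := fun j n => Cm j n ∩ {x | p j x + q j x ≤ (n : ℝ)} with hD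
  have hDB : ∀ j n, D j n ⊆ B j := fun j n => inter_subset_left.trans (hCmB j n)
  have hbound : ∀ j n x, x ∈ D j n → p j x + q j x ≤ (n : ℝ) := fun j n x hx => hx.2
  have hDmono : ∀ j m n, m ≤ n → D j m ⊆ D j n := by
    intro j m n hmn
    apply inter_subset_inter (hCmmono j m n hmn)
    intro x hx
    simp only [mem_setOf_eq] at hx ⊢
    have hc : (m : ℝ) ≤ (n : ℝ) := by exact_mod_cast hmn
    linarith
  have hDcl : ∀ j n, IsClosed (D j n) := by
    intro j n
    apply isClosed_of_closure_subset
    intro x hx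
    have hxC : x ∈ Cm j n := by
      have h := closure_mono (inter_subset_left : D j n ⊆ Cm j n) hx
      rwa [(hCmcl j n).closure_eq] at h
    have hxB : x ∈ B j := hCmB j n hxC
    refine ⟨hxC, ?_⟩
    simp only [mem_setOf_eq]
    by_contra hgt
    push_neg at hgt
    set δ := (p j x + q j x - n) / 2 with hδ
    have hδpos : 0 < δ := by simp only [hδ]; linarith
    obtain ⟨t1, ht1n, ht1⟩ := hplsc j x hxB (p j x - δ) (by linarith)
    obtain ⟨t2, ht2n, ht2⟩ := hqlsc j x hxB (q j x - δ) (by linarith)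
    obtain ⟨z, hzt, hzD⟩ := mem_closure_iff_nhds.1 hx _ (Filter.inter_mem ht1n ht2n)
    have hzB : z ∈ B j := hDB j n hzD
    have h1 := ht1 z hzt.1 hzB
    have h2 := ht2 z hzt.2 hzB
    have h3 : p j z + q j z ≤ (n : ℝ) := hzD.2
    simp only [hδ] at h1 h2
    linarith
  -- minimal level function
  have hexN : ∀ x : K, ∃ n, ∃ jj, jj ≤ n ∧ x ∈ D jj n := by
    intro x
    obtain ⟨m, hm⟩ := hCmcov (J x) x (hJB x)
    set c := Nat.ceil (p (J x) x + q (J x) x) with hc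
    refine ⟨max (J x) (max m c), J x, le_max_left _ _, ?_, ?_⟩
    · exact hCmmono _ m _ (by omega) hm
    · simp only [mem_setOf_eq]
      refine le_trans (Nat.le_ceil _) ?_
      exact_mod_cast le_trans (le_max_right m c) (le_max_right (J x) (max m c))
  set N : K → ℕ := fun x => sInf {n | ∃ jj, jj ≤ n ∧ x ∈ D jj n} with hN
  have hNmem : ∀ x, ∃ jj, jj ≤ N x ∧ x ∈ D jj (N x) := fun x => Nat.sInf_mem (hexN x)
  have hNE : ∀ x, x ∈ D (J x) (N x) := by
    intro x
    obtain ⟨jj, hjj, hxD⟩ := hNmem x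
    have h := hJu x jj (hDB _ _ hxD)
    rwa [h] at hxD
  have hNle : ∀ x, J x ≤ N x := by
    intro x
    obtain ⟨jj, hjj, hxD⟩ := hNmem x
    have h := hJu x jj (hDB _ _ hxD)
    omega
  have hNmin : ∀ x j m, m < N x → j ≤ m → x ∉ D j m := by
    intro x j m hm hjm hxD
    exact Nat.notMem_of_lt_sInf hm ⟨j, hjm, hxD⟩
  -- glue
  have hGU : LowerSemicontinuous (fun x => p (J x) x + ((N x : ℝ)) ^ 2) :=
    glue_lsc B D hDcl hDB hDmono J N hJu hNE hNle hNmin p q hp0 hq0 hplsc hbound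
  have hGV : LowerSemicontinuous (fun x => q (J x) x + ((N x : ℝ)) ^ 2) :=
    glue_lsc B D hDcl hDB hDmono J N hJu hNE hNle hNmin q p hq0 hp0 hqlsc
      (fun j n x hx => by linarith [hbound j n x hx])
  letI := TopologicalSpace.upgradeIsCompletelyMetrizable K
  refine diff_to_dsc (U := fun x => p (J x) x + ((N x : ℝ)) ^ 2)
    (V := fun x => q (J x) x + ((N x : ℝ)) ^ 2) ?_ ?_ hGU hGV ?_
  · exact fun x => add_nonneg (hp0 _ _) (by positivity)
  · exact fun x => add_nonneg (hq0 _ _) (by positivity)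
  · intro x
    have h := hfeq (J x) x (hJB x)
    show f x = p (J x) x + ((N x : ℝ)) ^ 2 - (q (J x) x + ((N x : ℝ)) ^ 2)
    linarith
end

section
/- Let K be a Polish space and f ∈ DSC(K). Then for every non-empty closed L ⊂ K, the set of strong continuity points of f|L contains a dense Gδ subset of L, where x is a strong continuity point of g if osc_α g(x) = 0 for every countable ordinal α. -/
set_option linter.unusedSectionVars false
set_option maxHeartbeats 1000000


open Filter Topology Set

open scoped ENNReal

noncomputable def uscEnv {X : Type*} [TopologicalSpace X] (g : X → ℝ≥0∞) : X → ℝ≥0∞ :=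
  fun x => Filter.limsup g (𝓝 x)

noncomputable def transOsc {X : Type*} [TopologicalSpace X] (f : X → ℝ) (β : Ordinal.{0}) :
    X → ℝ≥0∞ :=
  Ordinal.limitRecOn β (fun _ => 0)
    (fun _ O => uscEnv fun x => Filter.limsup (fun y => ENNReal.ofReal |f y - f x| + O y) (𝓝 x))
    (fun β _ ih => uscEnv fun x => ⨆ (α : Ordinal) (h : α < β), ih α h x)

def StrongContinuityPoint {X : Type*} [TopologicalSpace X] (g : X → ℝ) (x : X) : Prop :=
  ∀ α < Cardinal.ord.{0} (Cardinal.aleph 1), transOsc g α x = 0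

section Aux

variable {X : Type*} [TopologicalSpace X]

lemma self_le_limsup_nhds (g : X → ℝ≥0∞) (x : X) : g x ≤ limsup g (𝓝 x) := by
  refine le_limsup_of_frequently_le ?_ (by isBoundedDefault)
  intro h
  exact absurd le_rfl h.self_of_nhds

lemma limsup_limsup_nhds_le (g : X → ℝ≥0∞) (x : X) :
    limsup (fun y => limsup g (𝓝 y)) (𝓝 x) ≤ limsup g (𝓝 x) := by
  refine le_of_forall_gt_imp_ge_of_dense fun c hc => ?_
  have h1 : ∀ᶠ y in 𝓝 x, g y < c := eventually_lt_of_limsup_lt hc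
  have h2 : ∀ᶠ y in 𝓝 x, ∀ᶠ z in 𝓝 y, g z < c := h1.eventually_nhds
  refine limsup_le_of_le (by isBoundedDefault) ?_
  exact h2.mono fun y hy => limsup_le_of_le (by isBoundedDefault)
    (hy.mono fun z hz => hz.le)

lemma my_limsup_add_le {ι : Type*} (f : Filter ι) (u v : ι → ℝ≥0∞) :
    limsup (fun i => u i + v i) f ≤ limsup u f + limsup v f := by
  by_cases hA : limsup u f = ⊤
  · simp [hA]
  by_cases hB : limsup v f = ⊤
  · simp [hB]
  apply ENNReal.le_of_forall_pos_le_add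
  intro ε hε _
  have hhalf : ((ε : ℝ≥0∞)) / 2 ≠ 0 := by
    simp [ENNReal.div_eq_zero_iff, hε.ne']
  have ha : ∀ᶠ i in f, u i < limsup u f + (ε : ℝ≥0∞) / 2 :=
    eventually_lt_of_limsup_lt (ENNReal.lt_add_right hA hhalf)
  have hb : ∀ᶠ i in f, v i < limsup v f + (ε : ℝ≥0∞) / 2 :=
    eventually_lt_of_limsup_lt (ENNReal.lt_add_right hB hhalf)
  refine limsup_le_of_le (by isBoundedDefault) ?_
  filter_upwards [ha, hb] with i h1 h2
  calc u i + v i ≤ (limsup u f + (ε : ℝ≥0∞) / 2) + (limsup v f + (ε : ℝ≥0∞) / 2) :=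
        add_le_add h1.le h2.le
    _ = limsup u f + limsup v f + ((ε : ℝ≥0∞) / 2 + (ε : ℝ≥0∞) / 2) := by ring
    _ = limsup u f + limsup v f + (ε : ℝ≥0∞) := by rw [ENNReal.add_halves]

end Aux

section MyAux
variable {X : Type*} [TopologicalSpace X]

variable {X : Type*} [TopologicalSpace X]

noncomputable def auxS (g : ℕ → X → ℝ) (N : ℕ) (x : X) : ℝ :=
  ∑ n ∈ Finset.range N, |g (n + 1) x - g n x|

noncomputable def auxs (g : ℕ → X → ℝ) (x : X) : ℝ := ∑' n, |g (n + 1) x - g n x|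

noncomputable def auxUs (g : ℕ → X → ℝ) (x : X) : ℝ≥0∞ :=
  limsup (fun y => ENNReal.ofReal (auxs g y)) (𝓝 x)

noncomputable def auxD (g : ℕ → X → ℝ) (x : X) : ℝ≥0∞ :=
  auxUs g x - ENNReal.ofReal (auxs g x)

variable {g : ℕ → X → ℝ}

lemma auxS_nonneg (N : ℕ) (x : X) : 0 ≤ auxS g N x :=
  Finset.sum_nonneg fun _ _ => abs_nonneg _

lemma auxS_cont (hgc : ∀ n, Continuous (g n)) (N : ℕ) : Continuous (auxS g N) :=
  continuous_finset_sum _ fun n _ => ((hgc (n + 1)).sub (hgc n)).abs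

lemma auxS_le_s (hgs : ∀ x, Summable fun n => |g (n + 1) x - g n x|) (N : ℕ) (x : X) :
    auxS g N x ≤ auxs g x :=
  Summable.sum_le_tsum (Finset.range N) (fun _ _ => abs_nonneg _) (hgs x)

lemma auxS_tendsto (hgs : ∀ x, Summable fun n => |g (n + 1) x - g n x|) (x : X) :
    Tendsto (fun N => auxS g N x) atTop (𝓝 (auxs g x)) :=
  (hgs x).hasSum.tendsto_sum_nat

lemma aux_tel (x : X) {N M : ℕ} (hNM : N ≤ M) :
    |g M x - g N x| ≤ auxS g M x - auxS g N x := by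
  induction M, hNM using Nat.le_induction with
  | base => simp
  | succ M hNM ih =>
      have h1 : |g (M + 1) x - g N x| ≤ |g (M + 1) x - g M x| + |g M x - g N x| :=
        abs_sub_le _ _ _
      have h2 : auxS g (M + 1) x = auxS g M x + |g (M + 1) x - g M x| := by
        simp [auxS, Finset.sum_range_succ]
      linarith

lemma aux_tail {f : X → ℝ} (hgt : ∀ x, Tendsto (fun n => g n x) atTop (𝓝 (f x)))
    (hgs : ∀ x, Summable fun n => |g (n + 1) x - g n x|) (N : ℕ) (x : X) :
    |f x - g N x| ≤ auxs g x - auxS g N x := by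
  have h1 : Tendsto (fun M => |g M x - g N x|) atTop (𝓝 |f x - g N x|) :=
    (((hgt x).sub tendsto_const_nhds).abs)
  have h2 : Tendsto (fun (_ : ℕ) => auxs g x - auxS g N x) atTop (𝓝 (auxs g x - auxS g N x)) :=
    tendsto_const_nhds
  refine le_of_tendsto_of_tendsto h1 h2 ?_
  filter_upwards [eventually_ge_atTop N] with M hM
  exact (aux_tel x hM).trans (sub_le_sub_right (auxS_le_s hgs M x) _)

lemma aux_key {f : X → ℝ} (hgt : ∀ x, Tendsto (fun n => g n x) atTop (𝓝 (f x)))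
    (hgs : ∀ x, Summable fun n => |g (n + 1) x - g n x|) (N : ℕ) (x y : X) :
    |f y - f x| ≤ |g N y - g N x| + (auxs g y - auxS g N y) + (auxs g x - auxS g N x) := by
  have h1 : |f y - f x| ≤ |f y - g N y| + |g N y - f x| := abs_sub_le _ _ _
  have h2 : |g N y - f x| ≤ |g N y - g N x| + |g N x - f x| := abs_sub_le _ _ _
  have h3 := aux_tail hgt hgs N x
  have h4 := aux_tail hgt hgs N y
  have h5 : |g N x - f x| = |f x - g N x| := abs_sub_comm _ _
  linarith


lemma ennreal_sub_sub (a b c : ℝ≥0∞) : (a + c) - (b - c) ≤ (a - b) + (c + c) := by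
  rw [tsub_le_iff_right]
  have h1 : a ≤ a - b + b := le_tsub_add
  have h2 : b ≤ b - c + c := le_tsub_add
  calc a + c ≤ (a - b + b) + c := add_le_add_left h1 c
    _ ≤ (a - b + (b - c + c)) + c := add_le_add_left (add_le_add_right h2 _) c
    _ = (a - b) + (c + c) + (b - c) := by ring

lemma ennreal_tsub_chain {a b c : ℝ≥0∞} (hba : b ≤ a) (hcb : c ≤ b) (hc : c ≠ ⊤) :
    (b - c) + (a - b) ≤ a - c := by
  refine ENNReal.le_sub_of_add_le_right hc ?_
  calc b - c + (a - b) + c = (a - b) + (b - c + c) := by ring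
    _ = (a - b) + b := by rw [tsub_add_cancel_of_le hcb]
    _ = a := tsub_add_cancel_of_le hba
    _ ≤ a := le_rfl

lemma aux_UsS (hgc : ∀ n, Continuous (g n)) (N : ℕ) (x : X) :
    limsup (fun y => auxUs g y - ENNReal.ofReal (auxS g N y)) (𝓝 x)
      ≤ auxUs g x - ENNReal.ofReal (auxS g N x) := by
  apply ENNReal.le_of_forall_pos_le_add
  intro ε hε hfin
  have hUx : auxUs g x ≠ ⊤ := by
    intro h
    rw [h] at hfin
    simp [ENNReal.sub_eq_top_iff, ENNReal.ofReal_ne_top] at hfin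
  have hhalf : ((ε : ℝ≥0∞)) / 2 ≠ 0 := by
    simp [ENNReal.div_eq_zero_iff, hε.ne']
  have h1 : ∀ᶠ y in 𝓝 x, auxUs g y ≤ auxUs g x + (ε : ℝ≥0∞) / 2 := by
    have hlim : limsup (auxUs g) (𝓝 x) < auxUs g x + (ε : ℝ≥0∞) / 2 :=
      lt_of_le_of_lt (limsup_limsup_nhds_le _ x) (ENNReal.lt_add_right hUx hhalf)
    exact (eventually_lt_of_limsup_lt hlim).mono fun y hy => hy.le
  have h2 : ∀ᶠ y in 𝓝 x,
      ENNReal.ofReal (auxS g N x) - (ε : ℝ≥0∞) / 2 ≤ ENNReal.ofReal (auxS g N y) := by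
    rcases eq_or_ne (ENNReal.ofReal (auxS g N x) - (ε : ℝ≥0∞) / 2) 0 with h0 | h0
    · exact Eventually.of_forall fun y => by rw [h0]; exact zero_le
    · have hne : ENNReal.ofReal (auxS g N x) ≠ 0 := by
        intro h; exact h0 (by simp [h, zero_tsub])
      have hlt : ENNReal.ofReal (auxS g N x) - (ε : ℝ≥0∞) / 2 < ENNReal.ofReal (auxS g N x) :=
        ENNReal.sub_lt_self ENNReal.ofReal_ne_top hne hhalf
      have hc : Tendsto (fun y => ENNReal.ofReal (auxS g N y)) (𝓝 x)
          (𝓝 (ENNReal.ofReal (auxS g N x))) :=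
        ((ENNReal.continuous_ofReal.comp (auxS_cont hgc N)).tendsto x)
      exact (hc.eventually (lt_mem_nhds hlt)).mono fun y hy => hy.le
  have key : ∀ᶠ y in 𝓝 x, auxUs g y - ENNReal.ofReal (auxS g N y)
      ≤ (auxUs g x - ENNReal.ofReal (auxS g N x)) + ε := by
    filter_upwards [h1, h2] with y hy1 hy2
    calc auxUs g y - ENNReal.ofReal (auxS g N y)
        ≤ (auxUs g x + (ε : ℝ≥0∞) / 2) - (ENNReal.ofReal (auxS g N x) - (ε : ℝ≥0∞) / 2) :=
          tsub_le_tsub hy1 hy2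
      _ ≤ (auxUs g x - ENNReal.ofReal (auxS g N x)) + ((ε : ℝ≥0∞) / 2 + (ε : ℝ≥0∞) / 2) :=
          ennreal_sub_sub _ _ _
      _ = (auxUs g x - ENNReal.ofReal (auxS g N x)) + ε := by rw [ENNReal.add_halves]
  exact limsup_le_of_le (by isBoundedDefault) key

lemma aux_UD (hgc : ∀ n, Continuous (g n))
    (hgs : ∀ x, Summable fun n => |g (n + 1) x - g n x|)
    (h : X → ℝ≥0∞) (hh : ∀ y, h y ≤ auxD g y) (x : X) :
    limsup h (𝓝 x) ≤ auxD g x := by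
  have step : ∀ N, limsup h (𝓝 x) ≤ auxUs g x - ENNReal.ofReal (auxS g N x) := by
    intro N
    have hb : ∀ y, h y ≤ auxUs g y - ENNReal.ofReal (auxS g N y) := fun y =>
      (hh y).trans (tsub_le_tsub_left (ENNReal.ofReal_le_ofReal (auxS_le_s hgs N y)) _)
    exact (limsup_le_limsup (Eventually.of_forall hb)).trans (aux_UsS hgc N x)
  have step2 : ∀ N, limsup h (𝓝 x) ≤ auxD g x + ENNReal.ofReal (auxs g x - auxS g N x) := by
    intro N
    refine (step N).trans ?_
    rw [ENNReal.ofReal_sub _ (auxS_nonneg N x)]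
    exact tsub_le_tsub_add_tsub
  have htend : Tendsto (fun N => auxD g x + ENNReal.ofReal (auxs g x - auxS g N x)) atTop
      (𝓝 (auxD g x)) := by
    have h0 : Tendsto (fun N => auxs g x - auxS g N x) atTop (𝓝 0) := by
      have := (tendsto_const_nhds : Tendsto (fun _ : ℕ => auxs g x) atTop (𝓝 (auxs g x))).sub
        (auxS_tendsto hgs x)
      simpa using this
    have h1 : Tendsto (fun N => ENNReal.ofReal (auxs g x - auxS g N x)) atTop (𝓝 0) := by
      have := (ENNReal.continuous_ofReal.tendsto 0).comp h0
      simpa [Function.comp_def] using this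
    have := (tendsto_const_nhds : Tendsto (fun _ : ℕ => auxD g x) atTop (𝓝 (auxD g x))).add h1
    simpa using this
  exact ge_of_tendsto' htend step2

lemma aux_succ {f : X → ℝ} (hgc : ∀ n, Continuous (g n))
    (hgt : ∀ x, Tendsto (fun n => g n x) atTop (𝓝 (f x)))
    (hgs : ∀ x, Summable fun n => |g (n + 1) x - g n x|)
    (O : X → ℝ≥0∞) (hO : ∀ y, O y ≤ auxD g y) (x : X) :
    limsup (fun y => ENNReal.ofReal |f y - f x| + O y) (𝓝 x) ≤ auxD g x := by
  have step : ∀ N : ℕ, limsup (fun y => ENNReal.ofReal |f y - f x| + O y) (𝓝 x)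
      ≤ ENNReal.ofReal (auxs g x - auxS g N x)
        + (auxUs g x - ENNReal.ofReal (auxS g N x)) := by
    intro N
    set C := ENNReal.ofReal (auxs g x - auxS g N x) with hC
    have hpt : ∀ y, ENNReal.ofReal |f y - f x| + O y ≤
        (ENNReal.ofReal |g N y - g N x| + C) + (auxUs g y - ENNReal.ofReal (auxS g N y)) := by
      intro y
      have h1 := aux_key hgt hgs N x y
      have h2 : ENNReal.ofReal |f y - f x| ≤ ENNReal.ofReal |g N y - g N x|
          + (ENNReal.ofReal (auxs g y) - ENNReal.ofReal (auxS g N y)) + C := by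
        calc ENNReal.ofReal |f y - f x|
            ≤ ENNReal.ofReal
              (|g N y - g N x| + (auxs g y - auxS g N y) + (auxs g x - auxS g N x)) :=
              ENNReal.ofReal_le_ofReal h1
          _ ≤ ENNReal.ofReal (|g N y - g N x| + (auxs g y - auxS g N y)) + C :=
              ENNReal.ofReal_add_le
          _ ≤ (ENNReal.ofReal |g N y - g N x| + ENNReal.ofReal (auxs g y - auxS g N y)) + C :=
              add_le_add_left ENNReal.ofReal_add_le _
          _ = ENNReal.ofReal |g N y - g N x|
              + (ENNReal.ofReal (auxs g y) - ENNReal.ofReal (auxS g N y)) + C := by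
              rw [ENNReal.ofReal_sub _ (auxS_nonneg N y)]
      have h3 : (ENNReal.ofReal (auxs g y) - ENNReal.ofReal (auxS g N y))
          + (auxUs g y - ENNReal.ofReal (auxs g y)) ≤ auxUs g y - ENNReal.ofReal (auxS g N y) :=
        ennreal_tsub_chain (self_le_limsup_nhds _ y)
          (ENNReal.ofReal_le_ofReal (auxS_le_s hgs N y)) ENNReal.ofReal_ne_top
      calc ENNReal.ofReal |f y - f x| + O y
          ≤ (ENNReal.ofReal |g N y - g N x|
              + (ENNReal.ofReal (auxs g y) - ENNReal.ofReal (auxS g N y)) + C)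
            + (auxUs g y - ENNReal.ofReal (auxs g y)) := add_le_add h2 (hO y)
        _ = (ENNReal.ofReal |g N y - g N x| + C)
            + ((ENNReal.ofReal (auxs g y) - ENNReal.ofReal (auxS g N y))
              + (auxUs g y - ENNReal.ofReal (auxs g y))) := by ring
        _ ≤ (ENNReal.ofReal |g N y - g N x| + C)
            + (auxUs g y - ENNReal.ofReal (auxS g N y)) := add_le_add_right h3 _
    have hu : limsup (fun y => ENNReal.ofReal |g N y - g N x| + C) (𝓝 x) = C := by
      have hcont : Tendsto (fun y => ENNReal.ofReal |g N y - g N x| + C) (𝓝 x)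
          (𝓝 (ENNReal.ofReal |g N x - g N x| + C)) :=
        ((ENNReal.continuous_ofReal.comp (((hgc N).sub continuous_const).abs)).tendsto x).add
          tendsto_const_nhds
      have := hcont.limsup_eq
      simpa using this
    calc limsup (fun y => ENNReal.ofReal |f y - f x| + O y) (𝓝 x)
        ≤ limsup (fun y => (ENNReal.ofReal |g N y - g N x| + C)
            + (auxUs g y - ENNReal.ofReal (auxS g N y))) (𝓝 x) :=
          limsup_le_limsup (Eventually.of_forall hpt)
      _ ≤ limsup (fun y => ENNReal.ofReal |g N y - g N x| + C) (𝓝 x)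
            + limsup (fun y => auxUs g y - ENNReal.ofReal (auxS g N y)) (𝓝 x) :=
          my_limsup_add_le _ _ _
      _ ≤ C + (auxUs g x - ENNReal.ofReal (auxS g N x)) := add_le_add hu.le (aux_UsS hgc N x)
  have step2 : ∀ N : ℕ, limsup (fun y => ENNReal.ofReal |f y - f x| + O y) (𝓝 x)
      ≤ auxD g x + (ENNReal.ofReal (auxs g x - auxS g N x)
          + ENNReal.ofReal (auxs g x - auxS g N x)) := by
    intro N
    refine (step N).trans ?_
    have h4 : auxUs g x - ENNReal.ofReal (auxS g N x)
        ≤ auxD g x + ENNReal.ofReal (auxs g x - auxS g N x) := by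
      rw [ENNReal.ofReal_sub _ (auxS_nonneg N x)]
      exact tsub_le_tsub_add_tsub
    calc ENNReal.ofReal (auxs g x - auxS g N x) + (auxUs g x - ENNReal.ofReal (auxS g N x))
        ≤ ENNReal.ofReal (auxs g x - auxS g N x)
          + (auxD g x + ENNReal.ofReal (auxs g x - auxS g N x)) := add_le_add_right h4 _
      _ = auxD g x + (ENNReal.ofReal (auxs g x - auxS g N x)
          + ENNReal.ofReal (auxs g x - auxS g N x)) := by ring
  have htend : Tendsto (fun N => auxD g x + (ENNReal.ofReal (auxs g x - auxS g N x)
      + ENNReal.ofReal (auxs g x - auxS g N x))) atTop (𝓝 (auxD g x)) := by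
    have h0 : Tendsto (fun N => auxs g x - auxS g N x) atTop (𝓝 0) := by
      have := (tendsto_const_nhds : Tendsto (fun _ : ℕ => auxs g x) atTop (𝓝 (auxs g x))).sub
        (auxS_tendsto hgs x)
      simpa using this
    have h1 : Tendsto (fun N => ENNReal.ofReal (auxs g x - auxS g N x)) atTop (𝓝 0) := by
      have := (ENNReal.continuous_ofReal.tendsto 0).comp h0
      simpa [Function.comp_def] using this
    have := (tendsto_const_nhds :
      Tendsto (fun _ : ℕ => auxD g x) atTop (𝓝 (auxD g x))).add (h1.add h1)
    simpa using this
  exact ge_of_tendsto' htend step2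

lemma transOsc_zero (f : X → ℝ) : transOsc f 0 = fun _ => 0 :=
  Ordinal.limitRecOn_zero _ _ _

lemma transOsc_succ (f : X → ℝ) (α : Ordinal.{0}) : transOsc f (Order.succ α) =
    uscEnv fun x => limsup (fun y => ENNReal.ofReal |f y - f x| + transOsc f α y) (𝓝 x) :=
  Ordinal.limitRecOn_succ _ _ _ _

lemma transOsc_limit (f : X → ℝ) {β : Ordinal.{0}} (hβ : Order.IsSuccLimit β) : transOsc f β =
    uscEnv fun x => ⨆ (α : Ordinal) (_ : α < β), transOsc f α x :=
  Ordinal.limitRecOn_limit _ _ _ _ hβ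

lemma aux_main {f : X → ℝ} (hgc : ∀ n, Continuous (g n))
    (hgt : ∀ x, Tendsto (fun n => g n x) atTop (𝓝 (f x)))
    (hgs : ∀ x, Summable fun n => |g (n + 1) x - g n x|)
    (α : Ordinal.{0}) : ∀ x : X, transOsc f α x ≤ auxD g x := by
  induction α using Ordinal.limitRecOn with
  | zero => intro x; rw [transOsc_zero]; exact zero_le
  | add_one α ih =>
      intro x
      rw [← Order.succ_eq_add_one, transOsc_succ]
      exact aux_UD hgc hgs _ (fun y => aux_succ hgc hgt hgs _ ih y) x
  | limit β hβ ih =>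
      intro x
      rw [transOsc_limit f hβ]
      exact aux_UD hgc hgs _ (fun y => iSup₂_le fun α hα => ih α hα y) x

lemma aux_dense [BaireSpace X] (hgc : ∀ n, Continuous (g n))
    (hgs : ∀ x, Summable fun n => |g (n + 1) x - g n x|) :
    ∃ G : Set X, IsGδ G ∧ Dense G ∧ ∀ x ∈ G, auxD g x = 0 := by
  set C : ℕ → ℕ → Set X := fun k n => {x | auxs g x - auxS g n x ≤ 1 / (k + 1)} with hCdef
  have hCc : ∀ k n, IsClosed (C k n) := by
    intro k n
    have hrw : C k n = ⋂ M, {x | auxS g M x - auxS g n x ≤ 1 / (k + 1)} := by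
      ext x
      simp only [mem_iInter, mem_setOf_eq, hCdef]
      constructor
      · intro h M
        have := auxS_le_s hgs M x
        linarith
      · intro h
        have htd : Tendsto (fun M => auxS g M x - auxS g n x) atTop
            (𝓝 (auxs g x - auxS g n x)) :=
          (auxS_tendsto hgs x).sub tendsto_const_nhds
        exact le_of_tendsto htd (Eventually.of_forall h)
    rw [hrw]
    exact isClosed_iInter fun M =>
      isClosed_le ((auxS_cont hgc M).sub (auxS_cont hgc n)) continuous_const
  have hCu : ∀ k, (⋃ n, C k n) = univ := by
    intro k
    ext x
    simp only [mem_iUnion, mem_univ, iff_true, hCdef, mem_setOf_eq]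
    have hpos : (0 : ℝ) < 1 / (k + 1) := by positivity
    have hev : ∀ᶠ n in atTop, auxs g x - 1 / (k + 1) < auxS g n x :=
      (auxS_tendsto hgs x).eventually (lt_mem_nhds (by linarith))
    obtain ⟨n, hn⟩ := hev.exists
    exact ⟨n, by linarith⟩
  set U : ℕ → Set X := fun k => ⋃ n, interior (C k n) with hUdef
  have hUo : ∀ k, IsOpen (U k) := fun k => isOpen_iUnion fun n => isOpen_interior
  have hUd : ∀ k, Dense (U k) := fun k => dense_iUnion_interior_of_closed (hCc k) (hCu k)
  refine ⟨⋂ k, U k, IsGδ.iInter fun k => (hUo k).isGδ, dense_iInter_of_isOpen hUo hUd, ?_⟩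
  intro x hx
  have hk : ∀ k : ℕ, auxD g x ≤ ENNReal.ofReal (1 / (k + 1)) := by
    intro k
    obtain ⟨n, hn⟩ := mem_iUnion.1 (mem_iInter.1 hx k)
    have hnb : C k n ∈ 𝓝 x := mem_interior_iff_mem_nhds.1 hn
    have hb : ∀ᶠ y in 𝓝 x,
        ENNReal.ofReal (auxs g y) ≤ ENNReal.ofReal (auxS g n y + 1 / (k + 1)) := by
      filter_upwards [hnb] with y hy
      exact ENNReal.ofReal_le_ofReal (by simp only [hCdef, mem_setOf_eq] at hy; linarith)
    have hUs : auxUs g x ≤ ENNReal.ofReal (auxS g n x + 1 / (k + 1)) := by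
      refine (limsup_le_limsup hb).trans ?_
      have hcont : Tendsto (fun y => ENNReal.ofReal (auxS g n y + 1 / (k + 1))) (𝓝 x)
          (𝓝 (ENNReal.ofReal (auxS g n x + 1 / (k + 1)))) :=
        (ENNReal.continuous_ofReal.comp ((auxS_cont hgc n).add continuous_const)).tendsto x
      exact le_of_eq hcont.limsup_eq
    have h5 : auxUs g x ≤ ENNReal.ofReal (auxs g x) + ENNReal.ofReal (1 / (k + 1)) := by
      refine hUs.trans ?_
      calc ENNReal.ofReal (auxS g n x + 1 / (k + 1))
          ≤ ENNReal.ofReal (auxs g x + 1 / (k + 1)) :=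
            ENNReal.ofReal_le_ofReal (by linarith [auxS_le_s hgs n x])
        _ ≤ ENNReal.ofReal (auxs g x) + ENNReal.ofReal (1 / (k + 1)) := ENNReal.ofReal_add_le
    exact tsub_le_iff_left.2 h5
  have h0 : Tendsto (fun k : ℕ => ENNReal.ofReal (1 / (k + 1))) atTop (𝓝 0) := by
    have := (ENNReal.continuous_ofReal.tendsto 0).comp tendsto_one_div_add_atTop_nhds_zero_nat
    simpa [Function.comp_def] using this
  exact le_antisymm (ge_of_tendsto' h0 hk) (zero_le)


end MyAux

theorem differences_semicontinuous_stmt_15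
    {K : Type*} [TopologicalSpace K] [PolishSpace K] (f : K → ℝ) (hf : DSC f) :
    ∀ L : Set K, IsClosed L → L.Nonempty →
      ∃ G : Set L, IsGδ G ∧ Dense G ∧
        ∀ x ∈ G, StrongContinuityPoint (L.restrict f) x := by
  intro L hL _
  obtain ⟨g, hgc, hgt, hgs⟩ := hf
  haveI : PolishSpace L := hL.polishSpace
  haveI : BaireSpace L := by
    letI := TopologicalSpace.upgradeIsCompletelyMetrizable ↥L
    infer_instance
  have hgc' : ∀ n, Continuous (fun x : ↥L => g n x.1) :=
    fun n => (hgc n).comp continuous_subtype_val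
  have hgt' : ∀ x : ↥L, Tendsto (fun n => g n x.1) atTop (𝓝 (L.restrict f x)) :=
    fun x => hgt x.1
  have hgs' : ∀ x : ↥L, Summable fun n => |g (n + 1) x.1 - g n x.1| := fun x => hgs x.1
  obtain ⟨G, hGδ, hGd, hG0⟩ := aux_dense (g := fun n (x : ↥L) => g n x.1) hgc' hgs'
  refine ⟨G, hGδ, hGd, fun x hx α _ => ?_⟩
  exact le_antisymm
    ((aux_main hgc' hgt' hgs' α x).trans_eq (hG0 x hx)) (zero_le)
end

section
/- For any function f : K → ℝ on a Polish space K, osc₁ f ≤ osc f ≤ 2·osc₁ f pointwise, where osc f(x) = limsup_{y,z→x}|f(y)−f(z)| is the classical oscillation and osc₁ f(x) = U(limsup_{y→x}|f(y)−f(x)|). Consequently f is continuous at x iff osc₁ f(x) = 0. -/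
open Filter Topology Set

open scoped ENNReal

lemma transOsc_one_eq {X : Type*} [TopologicalSpace X] (f : X → ℝ) (w : X) :
    transOsc f 1 w =
      Filter.limsup (fun x => Filter.limsup (fun y => ENNReal.ofReal |f y - f x|) (𝓝 x)) (𝓝 w) := by
  have h1 : (1 : Ordinal) = Order.succ 0 := by simp
  rw [transOsc, h1, Ordinal.limitRecOn_succ]
  simp [uscEnv, Ordinal.limitRecOn_zero]

lemma two_mul_iInf {ι : Sort*} (g : ι → ℝ≥0∞) : 2 * ⨅ i, g i = ⨅ i, 2 * g i :=
  ENNReal.mul_iInf' (fun h => absurd h (by norm_num)) (fun h => absurd h (by norm_num))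


theorem differences_semicontinuous_stmt_18
    {K : Type*} [TopologicalSpace K] [PolishSpace K] (f : K → ℝ) (x : K) :
    transOsc f 1 x ≤ (⨅ U ∈ 𝓝 x, ⨆ y ∈ U, ⨆ z ∈ U, ENNReal.ofReal |f y - f z|) ∧
    (⨅ U ∈ 𝓝 x, ⨆ y ∈ U, ⨆ z ∈ U, ENNReal.ofReal |f y - f z|) ≤ 2 * transOsc f 1 x ∧
    (ContinuousAt f x ↔ transOsc f 1 x = 0) := by
  set O := (⨅ U ∈ 𝓝 x, ⨆ y ∈ U, ⨆ z ∈ U, ENNReal.ofReal |f y - f z|) with hOdef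
  -- Part 1 : transOsc f 1 x ≤ O
  have h1 : transOsc f 1 x ≤ O := by
    rw [transOsc_one_eq, limsup_eq_iInf_iSup]
    refine le_iInf₂ fun U hU => ?_
    refine le_trans (iInf₂_le (interior U) (interior_mem_nhds.2 hU)) ?_
    refine iSup₂_le fun w hw => ?_
    rw [limsup_eq_iInf_iSup]
    refine le_trans (iInf₂_le U (mem_interior_iff_mem_nhds.mp hw)) ?_
    refine iSup₂_le fun y hy => ?_
    exact le_iSup₂_of_le y hy (le_iSup₂_of_le w (interior_subset hw) le_rfl)
  -- g x ≤ transOsc f 1 x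
  have hTle : limsup (fun y => ENNReal.ofReal |f y - f x|) (𝓝 x) ≤ transOsc f 1 x := by
    rw [transOsc_one_eq]
    conv_rhs => rw [limsup_eq_iInf_iSup]
    exact le_iInf₂ fun U hU => le_iSup₂_of_le x (mem_of_mem_nhds hU) le_rfl
  -- key : osc over U ≤ 2 * sup over U of |f y - f x|
  have key : ∀ U ∈ 𝓝 x, (⨆ y ∈ U, ⨆ z ∈ U, ENNReal.ofReal |f y - f z|)
      ≤ 2 * ⨆ y ∈ U, ENNReal.ofReal |f y - f x| := by
    intro U hU
    refine iSup₂_le fun y hy => iSup₂_le fun z hz => ?_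
    rw [two_mul]
    calc ENNReal.ofReal |f y - f z|
        ≤ ENNReal.ofReal (|f y - f x| + |f z - f x|) := by
          refine ENNReal.ofReal_le_ofReal ?_
          calc |f y - f z| ≤ |f y - f x| + |f x - f z| := abs_sub_le _ _ _
            _ = |f y - f x| + |f z - f x| := by rw [abs_sub_comm (f x)]
      _ ≤ ENNReal.ofReal |f y - f x| + ENNReal.ofReal |f z - f x| := ENNReal.ofReal_add_le
      _ ≤ (⨆ y ∈ U, ENNReal.ofReal |f y - f x|) + ⨆ y ∈ U, ENNReal.ofReal |f y - f x| :=
          add_le_add (le_iSup₂_of_le y hy le_rfl) (le_iSup₂_of_le z hz le_rfl)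
  -- Part 2 : O ≤ 2 * transOsc f 1 x
  have h2 : O ≤ 2 * transOsc f 1 x := by
    refine le_trans ?_ (mul_le_mul_right hTle 2)
    rw [limsup_eq_iInf_iSup, two_mul_iInf]
    refine le_iInf fun U => ?_
    rw [two_mul_iInf]
    refine le_iInf fun hU => le_trans (iInf₂_le U hU) (key U hU)
  refine ⟨h1, h2, ?_⟩
  constructor
  · intro hc
    refine le_antisymm (le_trans h1 ?_) zero_le
    refine ENNReal.le_of_forall_pos_le_add fun ε hε _ => ?_
    have hev : ∀ᶠ y in 𝓝 x, |f y - f x| < (ε : ℝ) / 2 := by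
      have := Metric.tendsto_nhds.mp hc ((ε : ℝ) / 2) (by positivity)
      simpa [Real.dist_eq] using this
    refine le_trans (iInf₂_le {y | |f y - f x| < (ε : ℝ) / 2} hev) ?_
    rw [zero_add]
    refine iSup₂_le fun y hy => iSup₂_le fun z hz => ?_
    have : |f y - f z| ≤ (ε : ℝ) := by
      calc |f y - f z| ≤ |f y - f x| + |f x - f z| := abs_sub_le _ _ _
        _ ≤ (ε : ℝ) / 2 + (ε : ℝ) / 2 := by
            refine add_le_add hy.le ?_
            rw [abs_sub_comm]; exact hz.le
        _ = (ε : ℝ) := by ring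
    calc ENNReal.ofReal |f y - f z| ≤ ENNReal.ofReal (ε : ℝ) := ENNReal.ofReal_le_ofReal this
      _ = (ε : ℝ≥0∞) := ENNReal.ofReal_coe_nnreal
  · intro h0
    have hO0 : O = 0 := by
      refine le_antisymm ?_ zero_le
      rw [h0, mul_zero] at h2; exact h2
    rw [ContinuousAt, Metric.tendsto_nhds]
    intro ε hε
    have hlt : O < ENNReal.ofReal ε := by rw [hO0]; exact ENNReal.ofReal_pos.2 hε
    obtain ⟨U, hU2⟩ := iInf_lt_iff.mp hlt
    obtain ⟨hU, hSU⟩ := iInf_lt_iff.mp hU2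
    filter_upwards [hU] with y hy
    rw [Real.dist_eq]
    have hle : ENNReal.ofReal |f y - f x| ≤ ⨆ y ∈ U, ⨆ z ∈ U, ENNReal.ofReal |f y - f z| :=
      le_iSup₂_of_le y hy (le_iSup₂_of_le x (mem_of_mem_nhds hU) le_rfl)
    exact (ENNReal.ofReal_lt_ofReal_iff hε).mp (lt_of_le_of_lt hle hSU)
end
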